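/- arXiv:2507.20600 — 5 statements merged into one kernel-verified Lean document; each statement's English description precedes it below -/
import Mathlib

section
/- Let d, g ≥ 1 and let A_1, …, A_g be Hermitian d×d matrices with A_x² = I for each x ∈ [g] (for instance A_x = 2P_x − I for orthogonal projections P_x). Suppose s > 0 satisfies ∑_{x=1}^g ε_x A_x ≤ (1/s)·I for every sign vector ε ∈ {±1}^g. Then for every t with 1/(sg) < t ≤ 1, the 2-outcome POVMs ((I + tA_x)/2, (I − tA_x)/2), x ∈ [g], form an incompatible family; equivalently, the compatibility degree satisfies τ(A_1, …, A_g) ≤ 1/(sg). -/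
open Matrix MeasureTheory Filter
open scoped BigOperators ComplexOrder

/-- A POVM with `k` outcomes on `ℂ^d`. -/
def IsPOVM {d k : ℕ} (E : Fin k → Matrix (Fin d) (Fin d) ℂ) : Prop :=
  (∀ i, (E i).PosSemidef) ∧ ∑ i, E i = 1

/-- Compatibility of a family of `g` POVMs with `k` outcomes each. -/
def Compatible {d g k : ℕ} (E : Fin g → Fin k → Matrix (Fin d) (Fin d) ℂ) : Prop :=
  ∃ J : (Fin g → Fin k) → Matrix (Fin d) (Fin d) ℂ,
    (∀ f, (J f).PosSemidef) ∧ (∑ f, J f) = 1 ∧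
      ∀ x i, E x i = ∑ f ∈ Finset.univ.filter fun f : Fin g → Fin k => f x = i, J f

/-- Loewner order: `A ≤ B` iff `B - A` is positive semidefinite. -/
def loewnerLE {d : ℕ} (A B : Matrix (Fin d) (Fin d) ℂ) : Prop := (B - A).PosSemidef

/-- The noisy dichotomic POVM `((I + tA)/2, (I - tA)/2)`. -/
noncomputable def noisyPair {d : ℕ} (t : ℝ) (A : Matrix (Fin d) (Fin d) ℂ) :
    Fin 2 → Matrix (Fin d) (Fin d) ℂ :=
  ![(2⁻¹ : ℂ) • (1 + (t : ℂ) • A), (2⁻¹ : ℂ) • (1 - (t : ℂ) • A)]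

/-- The compatibility degree of a tuple of dichotomic observables. -/
noncomputable def tau {d g : ℕ} (A : Fin g → Matrix (Fin d) (Fin d) ℂ) : ℝ :=
  sSup {t : ℝ | 0 ≤ t ∧ t ≤ 1 ∧ Compatible fun x => noisyPair t (A x)}

/-- Largest eigenvalue of a Hermitian matrix (Rayleigh quotient formulation). -/
noncomputable def lambdaMax {d : ℕ} (A : Matrix (Fin d) (Fin d) ℂ) : ℝ :=
  sSup {r : ℝ | ∃ v : Fin d → ℂ, star v ⬝ᵥ v = 1 ∧ r = (star v ⬝ᵥ (A *ᵥ v)).re}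

/-- Smallest eigenvalue of a Hermitian matrix (Rayleigh quotient formulation). -/
noncomputable def lambdaMin {d : ℕ} (A : Matrix (Fin d) (Fin d) ℂ) : ℝ :=
  sInf {r : ℝ | ∃ v : Fin d → ℂ, star v ⬝ᵥ v = 1 ∧ r = (star v ⬝ᵥ (A *ᵥ v)).re}

/-- Operator norm (`ℓ₂ → ℓ₂`) of a complex matrix. -/
noncomputable def opNorm {d e : ℕ} (A : Matrix (Fin d) (Fin e) ℂ) : ℝ :=
  Real.sqrt (lambdaMax (Aᴴ * A))

/-- Signs indexed by booleans. -/
def sgn (b : Bool) : ℝ := if b then 1 else -1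

/-- The SDP value `λ(A)`. -/
noncomputable def lambdaSDP {d g : ℕ} (A : Fin g → Matrix (Fin d) (Fin d) ℂ) : ℝ :=
  sSup {r : ℝ | ∃ (Y : Fin g → Matrix (Fin d) (Fin d) ℂ) (ρ : Matrix (Fin d) (Fin d) ℂ),
    (∀ x, (Y x).IsHermitian) ∧ ρ.PosSemidef ∧ ρ.trace = 1 ∧
    (∀ ε : Fin g → Bool, loewnerLE (∑ x, (sgn (ε x) : ℂ) • Y x) ρ) ∧
    r = (∑ x, (A x * Y x).trace).re}

def PauliX : Matrix (Fin 2) (Fin 2) ℂ := !![0, 1; 1, 0]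
def PauliY : Matrix (Fin 2) (Fin 2) ℂ := !![0, -Complex.I; Complex.I, 0]
def PauliZ : Matrix (Fin 2) (Fin 2) ℂ := !![1, 0; 0, -1]

/-- The quantity `η(U₁,…,U_g)`. -/
noncomputable def eta {d g : ℕ} (U : Fin g → Matrix (Fin d) (Fin d) ℂ) : ℝ :=
  sSup {r : ℝ | ∃ f : Fin g → Fin d,
    r = lambdaMax (∑ x, U x * Matrix.single (f x) (f x) 1 * (U x)ᴴ)}

/-- Projection onto the span of the first `r` standard basis vectors. -/
def diagProj (d r : ℕ) : Matrix (Fin d) (Fin d) ℂ :=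
  Matrix.diagonal fun i => if (i : ℕ) < r then 1 else 0

/-- The diagonal matrix `Δ` with `d/2` entries `+1` followed by `d/2` entries `-1`. -/
def DeltaMat (d : ℕ) : Matrix (Fin d) (Fin d) ℂ :=
  Matrix.diagonal fun i => if (i : ℕ) < d / 2 then 1 else -1

/-- Orthogonal projection onto the random subspace `U · E₀` where `dim E₀ = r`. -/
noncomputable def randProj (d r : ℕ) (U : Matrix.unitaryGroup (Fin d) ℂ) :
    Matrix (Fin d) (Fin d) ℂ :=
  (U : Matrix (Fin d) (Fin d) ℂ) * diagProj d r * (U : Matrix (Fin d) (Fin d) ℂ)ᴴ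

/-- The dichotomic observable `P_E - P_E^⊥ = 2 P_E - I` of a random subspace. -/
noncomputable def randProjObs (d r : ℕ) (U : Matrix.unitaryGroup (Fin d) ℂ) :
    Matrix (Fin d) (Fin d) ℂ :=
  (2 : ℂ) • randProj d r U - 1

/-- The noisy basis measurement `(t U|i⟩⟨i|U* + (1-t) I/d)_i`. -/
noncomputable def basisPOVM {d : ℕ} (t : ℝ) (U : Matrix (Fin d) (Fin d) ℂ) :
    Fin d → Matrix (Fin d) (Fin d) ℂ :=
  fun i => (t : ℂ) • (U * Matrix.single i i 1 * Uᴴ) + (((1 - t) / d : ℝ) : ℂ) • 1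

noncomputable instance {m n : Type*} : MeasurableSpace (Matrix m n ℂ) :=
  inferInstanceAs (MeasurableSpace (m → n → ℂ))

lemma trace_psd_mul_re_nonneg {n : ℕ} {P Q : Matrix (Fin n) (Fin n) ℂ}
    (hP : P.PosSemidef) (hQ : Q.PosSemidef) : 0 ≤ ((P * Q).trace).re := by
  obtain ⟨B, hB⟩ : ∃ B : Matrix (Fin n) (Fin n) ℂ, P = Bᴴ * B := by
    open scoped MatrixOrder in exact CStarAlgebra.nonneg_iff_eq_star_mul_self.mp hP.nonneg
  obtain ⟨C, hC⟩ : ∃ C : Matrix (Fin n) (Fin n) ℂ, Q = Cᴴ * C := by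
    open scoped MatrixOrder in exact CStarAlgebra.nonneg_iff_eq_star_mul_self.mp hQ.nonneg
  have hcyc : (P * Q).trace = ((B * Cᴴ)ᴴ * (B * Cᴴ)).trace := by
    rw [hB, hC, Matrix.conjTranspose_mul, Matrix.conjTranspose_conjTranspose]
    rw [show Bᴴ * B * (Cᴴ * C) = (Bᴴ * (B * Cᴴ)) * C from by simp [Matrix.mul_assoc]]
    rw [Matrix.trace_mul_comm]
    simp [Matrix.mul_assoc]
  rw [hcyc]
  set M := B * Cᴴ
  have h : (0 : ℂ) ≤ (Mᴴ * M).trace := by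
    rw [Matrix.trace]
    apply Finset.sum_nonneg
    intro i _
    rw [Matrix.diag, Matrix.mul_apply]
    apply Finset.sum_nonneg
    intro j _
    rw [Matrix.conjTranspose_apply]
    exact star_mul_self_nonneg _
  rw [Complex.le_def] at h
  simpa using h.1

/-- if `∑ x, ε x • A x ≤ (1/s) • I` for all sign vectors `ε`, then for every
`t ∈ (1/(sg), 1]` the noisy dichotomic POVMs `((I + tA_x)/2, (I - tA_x)/2)` are incompatible;
equivalently `τ(A) ≤ 1/(sg)`. -/
theorem stmt1 {d g : ℕ} (hd : 1 ≤ d) (hg : 1 ≤ g)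
    (A : Fin g → Matrix (Fin d) (Fin d) ℂ)
    (hA : ∀ x, (A x).IsHermitian) (hsq : ∀ x, A x * A x = 1)
    (s : ℝ) (hs : 0 < s)
    (hbound : ∀ ε : Fin g → Bool,
      loewnerLE (∑ x, (sgn (ε x) : ℂ) • A x) (((1 / s : ℝ) : ℂ) • 1)) :
    (∀ t : ℝ, 1 / (s * g) < t → t ≤ 1 →
        ¬ Compatible fun x => noisyPair t (A x)) ∧
      tau A ≤ 1 / (s * g) := by
  have hd0 : (0 : ℝ) < d := by exact_mod_cast hd
  have hg0 : (0 : ℝ) < g := by exact_mod_cast hg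
  have main : ∀ t : ℝ, 1 / (s * g) < t → t ≤ 1 →
      ¬ Compatible fun x => noisyPair t (A x) := by
    intro t ht ht1 hcomp
    obtain ⟨J, hJpos, hJsum, hJmarg⟩ := hcomp
    -- Step 1: ∑ f, (±1) • J f = t • A x
    have step1 : ∀ x, ∑ f : Fin g → Fin 2,
        (if f x = 0 then (1:ℂ) else -1) • J f = (t : ℂ) • A x := by
      intro x
      have h0 := hJmarg x 0
      have h1 := hJmarg x 1
      have hsplit : ∑ f : Fin g → Fin 2, (if f x = 0 then (1:ℂ) else -1) • J f
          = (∑ f ∈ Finset.univ.filter fun f : Fin g → Fin 2 => f x = 0, J f)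
            - (∑ f ∈ Finset.univ.filter fun f : Fin g → Fin 2 => f x = 1, J f) := by
        rw [Finset.sum_filter, Finset.sum_filter, ← Finset.sum_sub_distrib]
        apply Finset.sum_congr rfl
        intro f _
        have h2 : f x = 0 ∨ f x = 1 := by omega
        rcases h2 with h | h <;> simp [h, neg_smul]
      rw [hsplit, ← h0, ← h1]
      simp only [noisyPair, Matrix.cons_val_zero, Matrix.cons_val_one, Matrix.head_cons]
      module
    -- per-x trace identity
    have hx : ∀ x, ∑ f : Fin g → Fin 2,
        (if f x = 0 then (1:ℂ) else -1) * ((A x) * J f).trace = (t : ℂ) * d := by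
      intro x
      have h1 : (A x * ((t:ℂ) • A x)).trace
          = ∑ f : Fin g → Fin 2, (if f x = 0 then (1:ℂ) else -1) * ((A x) * J f).trace := by
        rw [← step1 x, Matrix.mul_sum, Matrix.trace_sum]
        apply Finset.sum_congr rfl
        intro f _
        rw [mul_smul_comm, Matrix.trace_smul, smul_eq_mul]
      rw [← h1, mul_smul_comm, hsq x, Matrix.trace_smul, Matrix.trace_one]
      simp
    -- total trace T
    set T : ℂ := ∑ f : Fin g → Fin 2,
      ((∑ x, (if f x = 0 then (1:ℂ) else -1) • A x) * J f).trace with hT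
    have hTval : T = (g : ℂ) * ((t : ℂ) * d) := by
      rw [hT]
      have : ∀ f : Fin g → Fin 2,
          ((∑ x, (if f x = 0 then (1:ℂ) else -1) • A x) * J f).trace
          = ∑ x, (if f x = 0 then (1:ℂ) else -1) * ((A x) * J f).trace := by
        intro f
        rw [Finset.sum_mul, Matrix.trace_sum]
        apply Finset.sum_congr rfl
        intro x _
        rw [Matrix.smul_mul, Matrix.trace_smul, smul_eq_mul]
      simp_rw [this]
      rw [Finset.sum_comm]
      simp_rw [hx]
      rw [Finset.sum_const, Finset.card_univ, Fintype.card_fin, nsmul_eq_mul]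
    -- upper bound per f
    have key : ∀ f : Fin g → Fin 2,
        (((∑ x, (if f x = 0 then (1:ℂ) else -1) • A x) * J f).trace).re
          ≤ (1/s) * ((J f).trace).re := by
      intro f
      have hb := hbound fun x => decide (f x = 0)
      have hc : (∑ x, (sgn (decide (f x = 0)) : ℂ) • A x)
          = ∑ x, (if f x = 0 then (1:ℂ) else -1) • A x := by
        apply Finset.sum_congr rfl
        intro x _
        by_cases h : f x = 0 <;> simp [sgn, h]
      rw [loewnerLE, hc] at hb
      have h0 := trace_psd_mul_re_nonneg hb (hJpos f)
      rw [Matrix.sub_mul, Matrix.trace_sub, Complex.sub_re] at h0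
      have h1 : (((((1 / s : ℝ) : ℂ) • (1 : Matrix (Fin d) (Fin d) ℂ)) * J f).trace).re
          = (1/s) * ((J f).trace).re := by
        rw [Matrix.smul_mul, one_mul, Matrix.trace_smul, smul_eq_mul, Complex.re_ofReal_mul]
      linarith
    -- combine
    have hsumJ : ∑ f : Fin g → Fin 2, ((J f).trace).re = d := by
      rw [← Complex.re_sum, ← Matrix.trace_sum, hJsum, Matrix.trace_one]
      simp
    have hub : T.re ≤ (1/s) * d := by
      rw [hT, Complex.re_sum]
      calc ∑ f : Fin g → Fin 2,
            (((∑ x, (if f x = 0 then (1:ℂ) else -1) • A x) * J f).trace).re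
          ≤ ∑ f : Fin g → Fin 2, (1/s) * ((J f).trace).re :=
            Finset.sum_le_sum fun f _ => key f
        _ = (1/s) * d := by rw [← Finset.mul_sum, hsumJ]
    have hlb : T.re = g * (t * d) := by
      rw [hTval]
      have : (g : ℂ) * ((t : ℂ) * d) = ((g * (t * d) : ℝ) : ℂ) := by push_cast; ring
      rw [this, Complex.ofReal_re]
    rw [hlb] at hub
    -- derive contradiction
    have hgt : g * t ≤ 1 / s := by
      have := (mul_le_mul_iff_left₀ hd0).mp (by linarith : (g * t) * d ≤ (1/s) * d)
      exact this
    have hle : t ≤ 1 / (s * g) := by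
      rw [le_div_iff₀ (by positivity)]
      have h2 := mul_le_mul_of_nonneg_right hgt hs.le
      rw [one_div, inv_mul_cancel₀ hs.ne'] at h2
      nlinarith
    linarith
  refine ⟨main, ?_⟩
  apply Real.sSup_le
  · intro t ht
    obtain ⟨ht0, ht1, htc⟩ := ht
    by_contra h
    push_neg at h
    exact main t h ht1 htc
  · positivity
end

section
/- Let A = (A_1, …, A_g) and B = (B_1, …, B_g) be two g-tuples of dichotomic observables on ℂ^d. Then |λ(A) − λ(B)| ≤ ∑_{x=1}^g ‖A_x − B_x‖_∞, where ‖·‖_∞ denotes the operator norm. -/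
open Matrix MeasureTheory Filter
open scoped BigOperators ComplexOrder

namespace Stmt3Aux

variable {d : ℕ}

lemma trace_re_nonneg' {M : Matrix (Fin d) (Fin d) ℂ} (hM : M.PosSemidef) :
    0 ≤ M.trace.re := by
  have h : ∀ i, 0 ≤ (M i i).re := by
    intro i
    have := hM.re_dotProduct_nonneg (Pi.single i 1)
    simpa [Matrix.mulVec_single, dotProduct, Pi.single_apply] using this
  rw [Matrix.trace, Complex.re_sum]
  exact Finset.sum_nonneg fun i _ => h i

lemma trace_mul_re_nonneg' {P Q : Matrix (Fin d) (Fin d) ℂ} (hP : P.PosSemidef) (hQ : Q.PosSemidef) :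
    0 ≤ ((P * Q).trace).re := by
  obtain ⟨B, rfl⟩ : ∃ B : Matrix (Fin d) (Fin d) ℂ, P = star B * B := by
    open scoped MatrixOrder in
    exact CStarAlgebra.nonneg_iff_eq_star_mul_self.mp hP.nonneg
  rw [Matrix.star_eq_conjTranspose, Matrix.mul_assoc, Matrix.trace_mul_comm]
  exact trace_re_nonneg' (hQ.mul_mul_conjTranspose_same B)

lemma rayleigh_bddAbove' (M : Matrix (Fin d) (Fin d) ℂ) :
    BddAbove {r : ℝ | ∃ v : Fin d → ℂ, star v ⬝ᵥ v = 1 ∧ r = (star v ⬝ᵥ (M *ᵥ v)).re} := by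
  refine ⟨∑ i, ∑ j, ‖M i j‖, ?_⟩
  rintro r ⟨v, hv, rfl⟩
  have h1 : (∑ j, Complex.normSq (v j)) = 1 := by
    have := congrArg Complex.re hv
    simpa [dotProduct, Complex.re_sum, Complex.normSq_eq_conj_mul_self, Complex.normSq_apply] using this
  have hnorm : ∀ i, ‖v i‖ ≤ 1 := by
    intro i
    have h2 : Complex.normSq (v i) ≤ 1 := by
      rw [← h1]
      exact Finset.single_le_sum (fun j _ => Complex.normSq_nonneg _) (Finset.mem_univ i)
    rw [← Complex.sq_norm] at h2
    nlinarith [norm_nonneg (v i)]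
  calc (star v ⬝ᵥ (M *ᵥ v)).re ≤ ‖star v ⬝ᵥ (M *ᵥ v)‖ := Complex.re_le_norm _
    _ ≤ ∑ i, ‖star (v i) * (M *ᵥ v) i‖ := by
        rw [dotProduct]
        exact norm_sum_le _ _
    _ ≤ ∑ i, ∑ j, ‖M i j‖ := by
        refine Finset.sum_le_sum fun i _ => ?_
        rw [norm_mul]
        calc ‖star (v i)‖ * ‖(M *ᵥ v) i‖
            ≤ 1 * ‖(M *ᵥ v) i‖ := by
              refine mul_le_mul_of_nonneg_right ?_ (norm_nonneg _)
              simpa using hnorm i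
          _ = ‖(M *ᵥ v) i‖ := one_mul _
          _ ≤ ∑ j, ‖M i j * v j‖ := by
              rw [Matrix.mulVec, dotProduct]
              exact norm_sum_le _ _
          _ ≤ ∑ j, ‖M i j‖ := by
              refine Finset.sum_le_sum fun j _ => ?_
              rw [norm_mul]
              calc ‖M i j‖ * ‖v j‖
                  ≤ ‖M i j‖ * 1 :=
                    mul_le_mul_of_nonneg_left (hnorm j) (norm_nonneg _)
                _ = _ := mul_one _

lemma eig_abs_le {C : Matrix (Fin d) (Fin d) ℂ} (hC : C.IsHermitian) (i : Fin d) :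
    |hC.eigenvalues i| ≤ opNorm C := by
  set v : Fin d → ℂ := ⇑(hC.eigenvectorBasis i) with hvdef
  set μ : ℝ := hC.eigenvalues i
  have hunit : star v ⬝ᵥ v = 1 := by
    have h := hC.eigenvectorBasis.orthonormal.1 i
    have h2 : (inner ℂ (hC.eigenvectorBasis i) (hC.eigenvectorBasis i) : ℂ) = 1 := by
      rw [inner_self_eq_norm_sq_to_K, h]; norm_num
    rw [EuclideanSpace.inner_eq_star_dotProduct, dotProduct_comm] at h2
    simpa using h2
  have hmul : (Cᴴ * C) *ᵥ v = (μ * μ : ℝ) • v := by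
    rw [hC.eq, ← Matrix.mulVec_mulVec, hvdef, hC.mulVec_eigenvectorBasis,
      Matrix.mulVec_smul, hC.mulVec_eigenvectorBasis, smul_smul]
  have hray : (star v ⬝ᵥ ((Cᴴ * C) *ᵥ v)).re = μ * μ := by
    rw [hmul, dotProduct_smul, hunit]
    simp [Complex.real_smul]
  have hmem : μ * μ ∈ {r : ℝ | ∃ w : Fin d → ℂ, star w ⬝ᵥ w = 1 ∧ r = (star w ⬝ᵥ ((Cᴴ * C) *ᵥ w)).re} :=
    ⟨v, hunit, hray.symm⟩
  have hle : μ * μ ≤ lambdaMax (Cᴴ * C) := le_csSup (rayleigh_bddAbove' _) hmem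
  have : Real.sqrt (μ * μ) ≤ opNorm C := Real.sqrt_le_sqrt hle
  rwa [← Real.sqrt_mul_self_eq_abs]

lemma psd_real_smul {r : ℝ} (hr : 0 ≤ r) {M : Matrix (Fin d) (Fin d) ℂ} (hM : M.PosSemidef) :
    ((r : ℂ) • M).PosSemidef := by
  exact hM.smul (Complex.zero_le_real.mpr hr)

lemma psd_of_two_smul {M : Matrix (Fin d) (Fin d) ℂ} (h : ((2 : ℂ) • M).PosSemidef) :
    M.PosSemidef := by
  have : M = ((2⁻¹ : ℝ) : ℂ) • ((2 : ℂ) • M) := by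
    rw [smul_smul]; norm_num
  rw [this]
  exact psd_real_smul (by norm_num) h

lemma trace_mul_le {C Y ρ : Matrix (Fin d) (Fin d) ℂ} (hC : C.IsHermitian)
    (hρ : ρ.PosSemidef) (hρ1 : ρ.trace = 1)
    (h1 : (ρ - Y).PosSemidef) (h2 : (ρ + Y).PosSemidef) :
    ((C * Y).trace).re ≤ opNorm C := by
  set U : Matrix (Fin d) (Fin d) ℂ := (hC.eigenvectorUnitary : Matrix (Fin d) (Fin d) ℂ) with hU
  set μ : Fin d → ℝ := hC.eigenvalues with hμ
  set c : ℝ := opNorm C with hc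
  have hUU : U * Uᴴ = 1 := by
    rw [← Matrix.star_eq_conjTranspose]
    exact Matrix.mem_unitaryGroup_iff.mp hC.eigenvectorUnitary.2
  set P : Matrix (Fin d) (Fin d) ℂ := U * Matrix.diagonal (fun i => ((max (μ i) 0 : ℝ) : ℂ)) * Uᴴ with hPdef
  set N : Matrix (Fin d) (Fin d) ℂ := U * Matrix.diagonal (fun i => ((max (-(μ i)) 0 : ℝ) : ℂ)) * Uᴴ with hNdef
  set R : Matrix (Fin d) (Fin d) ℂ := U * Matrix.diagonal (fun i => ((c - |μ i| : ℝ) : ℂ)) * Uᴴ with hRdef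
  have hP : P.PosSemidef :=
    (Matrix.posSemidef_diagonal_iff.mpr fun i =>
      Complex.zero_le_real.mpr (le_max_right _ _)).mul_mul_conjTranspose_same U
  have hN : N.PosSemidef :=
    (Matrix.posSemidef_diagonal_iff.mpr fun i =>
      Complex.zero_le_real.mpr (le_max_right _ _)).mul_mul_conjTranspose_same U
  have hR : R.PosSemidef :=
    (Matrix.posSemidef_diagonal_iff.mpr fun i =>
      Complex.zero_le_real.mpr (by
        have := eig_abs_le hC i
        rw [← hc] at this
        linarith)).mul_mul_conjTranspose_same U
  have key1 : forall a : ℝ, ((max a 0 : ℝ) : ℂ) - ((max (-a) 0 : ℝ) : ℂ) = ((a : ℝ) : ℂ) := by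
    intro a
    rw [← Complex.ofReal_sub]
    norm_cast
    rcases le_total a 0 with h | h
    · rw [max_eq_right h, max_eq_left (by linarith)]; ring
    · rw [max_eq_left h, max_eq_right (by linarith)]; ring
  have key2 : forall a : ℝ, (c : ℂ) - (((max a 0 : ℝ) : ℂ) + ((max (-a) 0 : ℝ) : ℂ)) = ((c - |a| : ℝ) : ℂ) := by
    intro a
    rw [← Complex.ofReal_add, ← Complex.ofReal_sub]
    norm_cast
    rcases le_total a 0 with h | h
    · rw [max_eq_right h, max_eq_left (by linarith), abs_of_nonpos h]; ring
    · rw [max_eq_left h, max_eq_right (by linarith), abs_of_nonneg h]; ring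
  have hCPN : C = P - N := by
    rw [hPdef, hNdef, ← Matrix.sub_mul, ← Matrix.mul_sub, Matrix.diagonal_sub]
    nth_rewrite 1 [hC.spectral_theorem]
    rw [Unitary.conjStarAlgAut_apply, Matrix.star_eq_conjTranspose]
    rw [show (fun i => ((max (μ i) 0 : ℝ) : ℂ) - ((max (-(μ i)) 0 : ℝ) : ℂ))
        = (Complex.ofReal ∘ hC.eigenvalues) from funext fun i => by simpa using key1 (μ i)]
    rfl
  have hsum : (c : ℂ) • (1 : Matrix (Fin d) (Fin d) ℂ) - (P + N) = R := by
    have hdc : Matrix.diagonal (fun _ : Fin d => (c : ℂ)) = (c : ℂ) • 1 := by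
      ext i j
      by_cases h : i = j <;> simp [Matrix.diagonal_apply, Matrix.one_apply, h]
    have hone : (c : ℂ) • (1 : Matrix (Fin d) (Fin d) ℂ)
        = U * Matrix.diagonal (fun _ => (c : ℂ)) * Uᴴ := by
      rw [hdc, Matrix.mul_smul, Matrix.smul_mul, Matrix.mul_one, hUU]
    rw [hone, hPdef, hNdef, hRdef, ← Matrix.add_mul, ← Matrix.mul_add, Matrix.diagonal_add,
      ← Matrix.sub_mul, ← Matrix.mul_sub, Matrix.diagonal_sub]
    rw [show (fun i => (c : ℂ) - (((max (μ i) 0 : ℝ) : ℂ) + ((max (-(μ i)) 0 : ℝ) : ℂ)))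
        = (fun i => ((c - |μ i| : ℝ) : ℂ)) from funext fun i => key2 (μ i)]
  have e1 : ((C * Y).trace).re = ((P * Y).trace).re - ((N * Y).trace).re := by
    rw [hCPN, Matrix.sub_mul, Matrix.trace_sub, Complex.sub_re]
  have e2 : 0 ≤ ((P * ρ).trace).re - ((P * Y).trace).re := by
    have := trace_mul_re_nonneg' hP h1
    rwa [Matrix.mul_sub, Matrix.trace_sub, Complex.sub_re] at this
  have e3 : 0 ≤ ((N * ρ).trace).re + ((N * Y).trace).re := by
    have := trace_mul_re_nonneg' hN h2
    rwa [Matrix.mul_add, Matrix.trace_add, Complex.add_re] at this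
  have e4 : 0 ≤ c - (((P * ρ).trace).re + ((N * ρ).trace).re) := by
    have := trace_mul_re_nonneg' hR hρ
    rw [← hsum, Matrix.sub_mul, Matrix.add_mul, Matrix.smul_mul, Matrix.one_mul,
      Matrix.trace_sub, Matrix.trace_add, Matrix.trace_smul, hρ1,
      Complex.sub_re, Complex.add_re] at this
    simpa [smul_eq_mul] using this
  linarith

lemma feas_pm {g : ℕ} {Y : Fin g → Matrix (Fin d) (Fin d) ℂ} {ρ : Matrix (Fin d) (Fin d) ℂ}
    (hcon : ∀ ε : Fin g → Bool, loewnerLE (∑ x, (sgn (ε x) : ℂ) • Y x) ρ) (x : Fin g) :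
    (ρ - Y x).PosSemidef ∧ (ρ + Y x).PosSemidef := by
  constructor
  · have hA : (ρ - ∑ y, ((sgn true : ℝ) : ℂ) • Y y).PosSemidef := hcon (fun _ => true)
    have hB : (ρ - ∑ y, ((sgn (decide (y = x)) : ℝ) : ℂ) • Y y).PosSemidef :=
      hcon (fun y => decide (y = x))
    have hsum : (∑ y, ((sgn true : ℝ) : ℂ) • Y y) + (∑ y, ((sgn (decide (y = x)) : ℝ) : ℂ) • Y y)
        = (2 : ℂ) • Y x := by
      rw [← Finset.sum_add_distrib]
      rw [Finset.sum_eq_single x (fun y _ hyx => by simp [sgn, hyx]) (by simp)]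
      simp [sgn, two_smul]
    apply psd_of_two_smul
    have h := hA.add hB
    have heq : (ρ - ∑ y, ((sgn true : ℝ) : ℂ) • Y y) + (ρ - ∑ y, ((sgn (decide (y = x)) : ℝ) : ℂ) • Y y)
        = (2 : ℂ) • (ρ - Y x) := by
      calc (ρ - ∑ y, ((sgn true : ℝ) : ℂ) • Y y) + (ρ - ∑ y, ((sgn (decide (y = x)) : ℝ) : ℂ) • Y y)
          = (2 : ℂ) • (ρ - Y x) - (((∑ y, ((sgn true : ℝ) : ℂ) • Y y)
              + (∑ y, ((sgn (decide (y = x)) : ℝ) : ℂ) • Y y)) - (2 : ℂ) • Y x) := by module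
        _ = (2 : ℂ) • (ρ - Y x) := by rw [hsum]; simp
    rwa [heq] at h
  · have hA : (ρ - ∑ y, ((sgn false : ℝ) : ℂ) • Y y).PosSemidef := hcon (fun _ => false)
    have hB : (ρ - ∑ y, ((sgn (decide (y ≠ x)) : ℝ) : ℂ) • Y y).PosSemidef :=
      hcon (fun y => decide (y ≠ x))
    have hsum : (∑ y, ((sgn false : ℝ) : ℂ) • Y y) + (∑ y, ((sgn (decide (y ≠ x)) : ℝ) : ℂ) • Y y)
        = (-2 : ℂ) • Y x := by
      rw [← Finset.sum_add_distrib]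
      rw [Finset.sum_eq_single x (fun y _ hyx => by simp [sgn, hyx]) (by simp)]
      simp [sgn, two_smul]
    apply psd_of_two_smul
    have h := hA.add hB
    have heq : (ρ - ∑ y, ((sgn false : ℝ) : ℂ) • Y y) + (ρ - ∑ y, ((sgn (decide (y ≠ x)) : ℝ) : ℂ) • Y y)
        = (2 : ℂ) • (ρ + Y x) := by
      calc (ρ - ∑ y, ((sgn false : ℝ) : ℂ) • Y y) + (ρ - ∑ y, ((sgn (decide (y ≠ x)) : ℝ) : ℂ) • Y y)
          = (2 : ℂ) • (ρ + Y x) - (((∑ y, ((sgn false : ℝ) : ℂ) • Y y)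
              + (∑ y, ((sgn (decide (y ≠ x)) : ℝ) : ℂ) • Y y)) - (-2 : ℂ) • Y x) := by module
        _ = (2 : ℂ) • (ρ + Y x) := by rw [hsum]; simp
    rwa [heq] at h

end Stmt3Aux

namespace Stmt3Aux

lemma bddAbove_S {d g : ℕ} (A : Fin g → Matrix (Fin d) (Fin d) ℂ)
    (hA : ∀ x, (A x).IsHermitian) :
    BddAbove {r : ℝ | ∃ (Y : Fin g → Matrix (Fin d) (Fin d) ℂ) (ρ : Matrix (Fin d) (Fin d) ℂ),
      (∀ x, (Y x).IsHermitian) ∧ ρ.PosSemidef ∧ ρ.trace = 1 ∧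
      (∀ ε : Fin g → Bool, loewnerLE (∑ x, (sgn (ε x) : ℂ) • Y x) ρ) ∧
      r = (∑ x, (A x * Y x).trace).re} := by
  refine ⟨∑ x, opNorm (A x), ?_⟩
  rintro r ⟨Y, ρ, hY, hρ, hρ1, hcon, rfl⟩
  rw [Complex.re_sum]
  refine Finset.sum_le_sum fun x _ => ?_
  obtain ⟨h1, h2⟩ := feas_pm hcon x
  exact trace_mul_le (hA x) hρ hρ1 h1 h2

lemma oneside {d g : ℕ} (A B : Fin g → Matrix (Fin d) (Fin d) ℂ)
    (hA : ∀ x, (A x).IsHermitian) (hB : ∀ x, (B x).IsHermitian) :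
    lambdaSDP A ≤ lambdaSDP B + ∑ x, opNorm (A x - B x) := by
  have hnn : 0 ≤ ∑ x, opNorm (A x - B x) :=
    Finset.sum_nonneg fun x _ => Real.sqrt_nonneg _
  have hlB : lambdaSDP B = sSup {r : ℝ | ∃ (Y : Fin g → Matrix (Fin d) (Fin d) ℂ)
      (ρ : Matrix (Fin d) (Fin d) ℂ),
      (∀ x, (Y x).IsHermitian) ∧ ρ.PosSemidef ∧ ρ.trace = 1 ∧
      (∀ ε : Fin g → Bool, loewnerLE (∑ x, (sgn (ε x) : ℂ) • Y x) ρ) ∧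
      r = (∑ x, (B x * Y x).trace).re} := rfl
  by_cases hex : ∃ ρ : Matrix (Fin d) (Fin d) ℂ, ρ.PosSemidef ∧ ρ.trace = 1
  · obtain ⟨ρ₀, hρ₀, hρ₀1⟩ := hex
    have h0B : (0 : ℝ) ∈ {r : ℝ | ∃ (Y : Fin g → Matrix (Fin d) (Fin d) ℂ)
        (ρ : Matrix (Fin d) (Fin d) ℂ),
        (∀ x, (Y x).IsHermitian) ∧ ρ.PosSemidef ∧ ρ.trace = 1 ∧
        (∀ ε : Fin g → Bool, loewnerLE (∑ x, (sgn (ε x) : ℂ) • Y x) ρ) ∧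
        r = (∑ x, (B x * Y x).trace).re} := by
      refine ⟨fun _ => 0, ρ₀, fun _ => Matrix.isHermitian_zero, hρ₀, hρ₀1, fun ε => ?_, by simp⟩
      show (ρ₀ - ∑ x, (sgn (ε x) : ℂ) • (0 : Matrix (Fin d) (Fin d) ℂ)).PosSemidef
      simpa using hρ₀
    have hB0 : 0 ≤ lambdaSDP B := by
      rw [hlB]
      exact le_csSup (bddAbove_S B hB) h0B
    rw [show lambdaSDP A = sSup {r : ℝ | ∃ (Y : Fin g → Matrix (Fin d) (Fin d) ℂ)
        (ρ : Matrix (Fin d) (Fin d) ℂ),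
        (∀ x, (Y x).IsHermitian) ∧ ρ.PosSemidef ∧ ρ.trace = 1 ∧
        (∀ ε : Fin g → Bool, loewnerLE (∑ x, (sgn (ε x) : ℂ) • Y x) ρ) ∧
        r = (∑ x, (A x * Y x).trace).re} from rfl]
    apply Real.sSup_le _ (by linarith)
    rintro r ⟨Y, ρ, hY, hρ, hρ1, hcon, rfl⟩
    have hle1 : (∑ x, (B x * Y x).trace).re ≤ lambdaSDP B := by
      rw [hlB]
      exact le_csSup (bddAbove_S B hB) ⟨Y, ρ, hY, hρ, hρ1, hcon, rfl⟩
    have hsplit : (∑ x, (A x * Y x).trace).re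
        = (∑ x, (B x * Y x).trace).re + ∑ x, (((A x - B x) * Y x).trace).re := by
      rw [show (∑ x, (A x * Y x).trace)
          = (∑ x, (B x * Y x).trace) + ∑ x, (((A x - B x) * Y x).trace) from by
        rw [← Finset.sum_add_distrib]
        exact Finset.sum_congr rfl fun x _ => by rw [Matrix.sub_mul, Matrix.trace_sub]; ring]
      simp [Complex.add_re, Complex.re_sum]
    rw [hsplit]
    have hle2 : ∑ x, (((A x - B x) * Y x).trace).re ≤ ∑ x, opNorm (A x - B x) := by
      refine Finset.sum_le_sum fun x _ => ?_
      obtain ⟨h1, h2⟩ := feas_pm hcon x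
      exact trace_mul_le ((hA x).sub (hB x)) hρ hρ1 h1 h2
    linarith
  · have hempty : ∀ (C : Fin g → Matrix (Fin d) (Fin d) ℂ),
        {r : ℝ | ∃ (Y : Fin g → Matrix (Fin d) (Fin d) ℂ) (ρ : Matrix (Fin d) (Fin d) ℂ),
        (∀ x, (Y x).IsHermitian) ∧ ρ.PosSemidef ∧ ρ.trace = 1 ∧
        (∀ ε : Fin g → Bool, loewnerLE (∑ x, (sgn (ε x) : ℂ) • Y x) ρ) ∧
        r = (∑ x, (C x * Y x).trace).re} = ∅ := by
      intro C
      refine Set.eq_empty_iff_forall_notMem.mpr ?_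
      rintro r ⟨Y, ρ, hY, hρ, hρ1, -, -⟩
      exact hex ⟨ρ, hρ, hρ1⟩
    have hA0 : lambdaSDP A = 0 := by
      rw [show lambdaSDP A = sSup {r : ℝ | ∃ (Y : Fin g → Matrix (Fin d) (Fin d) ℂ)
          (ρ : Matrix (Fin d) (Fin d) ℂ),
          (∀ x, (Y x).IsHermitian) ∧ ρ.PosSemidef ∧ ρ.trace = 1 ∧
          (∀ ε : Fin g → Bool, loewnerLE (∑ x, (sgn (ε x) : ℂ) • Y x) ρ) ∧
          r = (∑ x, (A x * Y x).trace).re} from rfl, hempty A, Real.sSup_empty]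
    have hB00 : lambdaSDP B = 0 := by
      rw [hlB, hempty B, Real.sSup_empty]
    rw [hA0, hB00]
    linarith

end Stmt3Aux

/-- the functional `λ` is Lipschitz with respect to the `ℓ₁(S∞)` norm. -/
theorem stmt3 {d g : ℕ}
    (A B : Fin g → Matrix (Fin d) (Fin d) ℂ)
    (hA : ∀ x, (A x).IsHermitian ∧ loewnerLE (-1) (A x) ∧ loewnerLE (A x) 1)
    (hB : ∀ x, (B x).IsHermitian ∧ loewnerLE (-1) (B x) ∧ loewnerLE (B x) 1) :
    |lambdaSDP A - lambdaSDP B| ≤ ∑ x, opNorm (A x - B x) := by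
  have hsym : ∀ x, opNorm (B x - A x) = opNorm (A x - B x) := by
    intro x
    have h : (B x - A x)ᴴ * (B x - A x) = (A x - B x)ᴴ * (A x - B x) := by
      rw [show B x - A x = -(A x - B x) from (neg_sub _ _).symm,
        Matrix.conjTranspose_neg, Matrix.neg_mul, Matrix.mul_neg, neg_neg]
    rw [opNorm, opNorm, h]
  rw [abs_sub_le_iff]
  constructor
  · have := Stmt3Aux.oneside A B (fun x => (hA x).1) (fun x => (hB x).1)
    linarith
  · have := Stmt3Aux.oneside B A (fun x => (hB x).1) (fun x => (hA x).1)
    calc lambdaSDP B - lambdaSDP A ≤ ∑ x, opNorm (B x - A x) := by linarith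
      _ = ∑ x, opNorm (A x - B x) := Finset.sum_congr rfl fun x _ => hsym x
end

section
/- Let g, k, d ≥ 1, let B = (B_1, …, B_g) be a g-tuple of dichotomic observables on ℂ^k with λ(B) = √g (as holds for the g-tuple of generalized Pauli dichotomic observables), and let A = (A_1, …, A_g) be a g-tuple of dichotomic observables on ℂ^d. Suppose there exist an isometry V : ℂ^k → ℂ^d and 0 < ε < √g such that ∑_{x=1}^g ‖V*A_xV − B_x‖_∞ ≤ ε. Then τ(A) ≤ 1/(√g − ε). -/
open Matrix MeasureTheory Filter
open scoped BigOperators ComplexOrder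

section AuxLemmas

lemma psd_trace_nonneg {n : ℕ} {M : Matrix (Fin n) (Fin n) ℂ} (hM : M.PosSemidef) :
    0 ≤ M.trace := by
  unfold Matrix.trace
  refine Finset.sum_nonneg fun i _ => ?_
  have := hM.dotProduct_mulVec_nonneg (Pi.single i 1)
  simpa [Matrix.mulVec_single, dotProduct, Pi.single_apply] using this

lemma psd_trace_mul_nonneg {n : ℕ} {M N : Matrix (Fin n) (Fin n) ℂ}
    (hM : M.PosSemidef) (hN : N.PosSemidef) : 0 ≤ (M * N).trace := by
  obtain ⟨C, rfl⟩ : ∃ C : Matrix (Fin n) (Fin n) ℂ, N = Cᴴ * C :=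
    by open scoped MatrixOrder in exact CStarAlgebra.nonneg_iff_eq_star_mul_self.mp hN.nonneg
  have h1 : (M * (Cᴴ * C)).trace = (C * M * Cᴴ).trace := by
    rw [← Matrix.mul_assoc, Matrix.trace_mul_cycle]
  rw [h1]
  exact psd_trace_nonneg (hM.mul_mul_conjTranspose_same C)

lemma herm_dot_real {n : ℕ} {C : Matrix (Fin n) (Fin n) ℂ} (hC : C.IsHermitian)
    (v : Fin n → ℂ) : star v ⬝ᵥ (C *ᵥ v) = ((star v ⬝ᵥ (C *ᵥ v)).re : ℂ) := by
  have h : (starRingEnd ℂ) (star v ⬝ᵥ (C *ᵥ v)) = star v ⬝ᵥ (C *ᵥ v) := by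
    calc (starRingEnd ℂ) (star v ⬝ᵥ (C *ᵥ v)) = star (star v ⬝ᵥ (C *ᵥ v)) := rfl
    _ = star (C *ᵥ v) ⬝ᵥ star (star v) := (star_dotProduct_star (C *ᵥ v) (star v)).symm
    _ = (star v ᵥ* Cᴴ) ⬝ᵥ v := by rw [star_mulVec, star_star]
    _ = star v ⬝ᵥ (Cᴴ *ᵥ v) := (dotProduct_mulVec _ _ _).symm
    _ = star v ⬝ᵥ (C *ᵥ v) := by rw [hC.eq]
  exact (Complex.conj_eq_iff_re.mp h).symm

lemma unit_norm_sq {n : ℕ} {v : Fin n → ℂ} (hv : star v ⬝ᵥ v = 1) :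
    ∑ j, Complex.normSq (v j) = 1 := by
  have : (star v ⬝ᵥ v) = ((∑ j, Complex.normSq (v j) : ℝ) : ℂ) := by
    simp [dotProduct, Complex.normSq_eq_conj_mul_self]
  rw [this] at hv
  exact_mod_cast hv

lemma unit_abs_le_one {n : ℕ} {v : Fin n → ℂ} (hv : star v ⬝ᵥ v = 1) (i : Fin n) :
    ‖v i‖ ≤ 1 := by
  have h := unit_norm_sq hv
  have h1 : Complex.normSq (v i) ≤ 1 := by
    rw [← h]
    exact Finset.single_le_sum (fun j _ => Complex.normSq_nonneg _) (Finset.mem_univ i)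
  rw [← Real.sqrt_one]
  rw [Complex.norm_def]
  exact Real.sqrt_le_sqrt h1

lemma rayleigh_bddAbove {n : ℕ} (M : Matrix (Fin n) (Fin n) ℂ) :
    BddAbove {r : ℝ | ∃ v : Fin n → ℂ, star v ⬝ᵥ v = 1 ∧ r = (star v ⬝ᵥ (M *ᵥ v)).re} := by
  refine ⟨∑ i, ∑ j, ‖M i j‖, fun r hr => ?_⟩
  obtain ⟨v, hv, rfl⟩ := hr
  have habs : ‖star v ⬝ᵥ (M *ᵥ v)‖ ≤ ∑ i, ∑ j, ‖M i j‖ := by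
    calc ‖star v ⬝ᵥ (M *ᵥ v)‖
        = ‖∑ i, (starRingEnd ℂ) (v i) * ∑ j, M i j * v j‖ := by
          simp [dotProduct, Matrix.mulVec, Pi.star_apply]
      _ ≤ ∑ i, ‖(starRingEnd ℂ) (v i) * ∑ j, M i j * v j‖ :=
          norm_sum_le _ _
      _ ≤ ∑ i, ∑ j, ‖M i j‖ := by
          refine Finset.sum_le_sum fun i _ => ?_
          rw [norm_mul]
          have h1 : ‖(starRingEnd ℂ) (v i)‖ ≤ 1 := by
            rw [Complex.norm_conj]; exact unit_abs_le_one hv i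
          calc ‖(starRingEnd ℂ) (v i)‖ * ‖∑ j, M i j * v j‖
              ≤ 1 * ‖∑ j, M i j * v j‖ := by
                apply mul_le_mul_of_nonneg_right h1 (norm_nonneg _)
            _ = ‖∑ j, M i j * v j‖ := one_mul _
            _ ≤ ∑ j, ‖M i j * v j‖ := norm_sum_le _ _
            _ ≤ ∑ j, ‖M i j‖ := by
                refine Finset.sum_le_sum fun j _ => ?_
                rw [norm_mul]
                calc ‖M i j‖ * ‖v j‖
                    ≤ ‖M i j‖ * 1 :=
                      mul_le_mul_of_nonneg_left (unit_abs_le_one hv j) (norm_nonneg _)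
                  _ = ‖M i j‖ := mul_one _
  exact (Complex.abs_re_le_norm _).trans habs |>.trans' (le_abs_self _)

lemma rayleigh_abs_le_opNorm {n : ℕ} {C : Matrix (Fin n) (Fin n) ℂ} (hC : C.IsHermitian)
    {v : Fin n → ℂ} (hv : star v ⬝ᵥ v = 1) :
    |(star v ⬝ᵥ (C *ᵥ v)).re| ≤ opNorm C := by
  set r : ℝ := (star v ⬝ᵥ (C *ᵥ v)).re with hr
  have hc : star v ⬝ᵥ (C *ᵥ v) = (r : ℂ) := herm_dot_real hC v
  set q : ℂ := star v ⬝ᵥ ((Cᴴ * C) *ᵥ v) with hq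
  have e0 : star (C *ᵥ v) ⬝ᵥ (C *ᵥ v) = q := by
    rw [star_mulVec, ← dotProduct_mulVec, mulVec_mulVec]
  have e2 : star (C *ᵥ v) ⬝ᵥ v = (r : ℂ) := by
    rw [star_mulVec, ← dotProduct_mulVec, hC.eq, hc]
  -- expand ‖C v - r v‖² ≥ 0
  have hw : star (C *ᵥ v - (r : ℂ) • v) ⬝ᵥ (C *ᵥ v - (r : ℂ) • v) = q - (r : ℂ) ^ 2 := by
    rw [star_sub, star_smul, sub_dotProduct, dotProduct_sub, dotProduct_sub,
      e0, smul_dotProduct, smul_dotProduct, dotProduct_smul, e2, hc, dotProduct_smul, hv]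
    simp [Complex.star_def, Complex.conj_ofReal, smul_eq_mul]
    ring
  have h0 : (0 : ℂ) ≤ q - (r : ℂ) ^ 2 := hw ▸ dotProduct_star_self_nonneg _
  have hq0 : (0 : ℂ) ≤ q := e0 ▸ dotProduct_star_self_nonneg _
  have hr2 : r ^ 2 ≤ q.re := by
    have := (Complex.le_def.mp h0).1
    simp only [Complex.zero_re, Complex.sub_re, ← Complex.ofReal_pow, Complex.ofReal_re] at this
    linarith
  have hmem : q.re ∈ {s : ℝ | ∃ w : Fin n → ℂ, star w ⬝ᵥ w = 1 ∧
      s = (star w ⬝ᵥ ((Cᴴ * C) *ᵥ w)).re} := ⟨v, hv, rfl⟩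
  have hle : q.re ≤ lambdaMax (Cᴴ * C) := le_csSup (rayleigh_bddAbove _) hmem
  have hL0 : 0 ≤ lambdaMax (Cᴴ * C) :=
    le_trans (Complex.le_def.mp hq0).1 hle
  have : r ^ 2 ≤ lambdaMax (Cᴴ * C) := le_trans hr2 hle
  calc |r| = Real.sqrt (r ^ 2) := (Real.sqrt_sq_eq_abs r).symm
  _ ≤ Real.sqrt (lambdaMax (Cᴴ * C)) := Real.sqrt_le_sqrt this
  _ = opNorm C := rfl

lemma psd_of_rayleigh_le {n : ℕ} {C : Matrix (Fin n) (Fin n) ℂ} (hC : C.IsHermitian) {δ : ℝ}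
    (h : ∀ v : Fin n → ℂ, star v ⬝ᵥ v = 1 → (star v ⬝ᵥ (C *ᵥ v)).re ≤ δ) :
    ((δ : ℂ) • 1 - C).PosSemidef := by
  rw [Matrix.posSemidef_iff_dotProduct_mulVec]
  constructor
  · have h1 : ((δ : ℂ) • (1 : Matrix (Fin n) (Fin n) ℂ)).IsHermitian := by
      unfold Matrix.IsHermitian
      rw [conjTranspose_smul, conjTranspose_one]
      simp [Complex.star_def, Complex.conj_ofReal]
    exact h1.sub hC
  · intro x
    rcases eq_or_ne x 0 with rfl | hx
    · simp
    · have hm : ∃ j, x j ≠ 0 := by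
        by_contra hcon
        push_neg at hcon
        exact hx (funext hcon)
      obtain ⟨j, hj⟩ := hm
      set m : ℝ := ∑ i, Complex.normSq (x i) with hmdef
      have hm0 : 0 < m := by
        refine Finset.sum_pos' (fun i _ => Complex.normSq_nonneg _) ⟨j, Finset.mem_univ j, ?_⟩
        exact Complex.normSq_pos.mpr hj
      have hxx : star x ⬝ᵥ x = (m : ℂ) := by
        simp [dotProduct, Complex.normSq_eq_conj_mul_self, hmdef]
      set s : ℝ := Real.sqrt m with hsdef
      have hs0 : 0 < s := Real.sqrt_pos.mpr hm0
      have hss : s * s = m := Real.mul_self_sqrt hm0.le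
      set v : Fin n → ℂ := ((s⁻¹ : ℝ) : ℂ) • x with hvdef
      have hsc : ∀ (M : Matrix (Fin n) (Fin n) ℂ),
          star v ⬝ᵥ (M *ᵥ v) = ((s⁻¹ : ℝ)^2 : ℝ) • (star x ⬝ᵥ (M *ᵥ x)) := by
        intro M
        rw [hvdef, star_smul, smul_dotProduct, mulVec_smul, dotProduct_smul]
        simp [Complex.star_def, Complex.conj_ofReal, smul_smul]
        push_cast
        ring
      have hvv : star v ⬝ᵥ v = 1 := by
        have : star v ⬝ᵥ v = ((s⁻¹:ℝ)^2 : ℝ) • (star x ⬝ᵥ x) := by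
          rw [hvdef, star_smul, smul_dotProduct, dotProduct_smul]
          simp [Complex.star_def, Complex.conj_ofReal, smul_smul]
          push_cast; ring
        rw [this, hxx]
        rw [Complex.real_smul]
        push_cast
        field_simp
        rw [← hss]; push_cast; ring
      have hray := h v hvv
      have hcx : star x ⬝ᵥ (C *ᵥ x) = ((star x ⬝ᵥ (C *ᵥ x)).re : ℂ) := herm_dot_real hC x
      set rx : ℝ := (star x ⬝ᵥ (C *ᵥ x)).re with hrx
      have hvc : star v ⬝ᵥ (C *ᵥ v) = (((s⁻¹)^2 * rx : ℝ) : ℂ) := by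
        rw [hsc C, hcx]
        rw [Complex.real_smul]
        push_cast; ring
      have hray' : (s⁻¹)^2 * rx ≤ δ := by
        have := hray
        rw [hvc] at this
        rwa [Complex.ofReal_re] at this
      have hrxle : rx ≤ δ * m := by
        have hsim : (s⁻¹)^2 = m⁻¹ := by
          rw [pow_two, ← mul_inv, hss]
        rw [hsim] at hray'
        have := mul_le_mul_of_nonneg_right hray' hm0.le
        calc rx = m⁻¹ * rx * m := by field_simp
        _ ≤ δ * m := this
      have hquad : star x ⬝ᵥ (((δ:ℂ) • 1 - C) *ᵥ x) = ((δ * m - rx : ℝ) : ℂ) := by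
        rw [sub_mulVec, dotProduct_sub, smul_mulVec, one_mulVec, dotProduct_smul,
          hxx, hcx]
        simp only [smul_eq_mul]
        push_cast
        try ring
      rw [hquad]
      rw [Complex.zero_le_real]
      linarith

lemma trace_mono {n : ℕ} {P X Y : Matrix (Fin n) (Fin n) ℂ} (hP : P.PosSemidef)
    (h : loewnerLE X Y) : (P * X).trace.re ≤ (P * Y).trace.re := by
  have h0 : 0 ≤ (P * (Y - X)).trace := psd_trace_mul_nonneg hP h
  have : (P * (Y - X)).trace = (P * Y).trace - (P * X).trace := by
    rw [mul_sub, trace_sub]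
  rw [this] at h0
  have := (Complex.le_def.mp h0).1
  simp [Complex.sub_re] at this
  linarith

lemma psd_sum {n g : ℕ} {F : Fin g → Matrix (Fin n) (Fin n) ℂ}
    (h : ∀ x, (F x).PosSemidef) : (∑ x, F x).PosSemidef := by
  classical
  induction (Finset.univ : Finset (Fin g)) using Finset.induction_on with
  | empty => simpa using Matrix.PosSemidef.zero
  | insert _ _ hx ih => rw [Finset.sum_insert hx]; exact (h _).add ih

lemma retrace_ge_neg {n : ℕ} {D Z ρ : Matrix (Fin n) (Fin n) ℂ} {δ : ℝ}
    (h1 : ((δ:ℂ) • 1 - D).PosSemidef) (h2 : ((δ:ℂ) • 1 + D).PosSemidef)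
    (hZρ : loewnerLE Z ρ) (hZρ' : loewnerLE (-Z) ρ)
    (htr : ρ.trace = 1) : -δ ≤ (D * Z).trace.re := by
  have e1 : (0:ℝ) ≤ ((((δ:ℂ) • 1 + D) * (ρ + Z)).trace).re := by
    have := psd_trace_mul_nonneg h2 (by simpa [loewnerLE, sub_neg_eq_add] using hZρ')
    exact (Complex.le_def.mp this).1
  have e2 : (0:ℝ) ≤ ((((δ:ℂ) • 1 - D) * (ρ - Z)).trace).re := by
    exact (Complex.le_def.mp (psd_trace_mul_nonneg h1 hZρ)).1
  have key : (((δ:ℂ) • 1 + D) * (ρ + Z)).trace + (((δ:ℂ) • 1 - D) * (ρ - Z)).trace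
      = 2 * (δ:ℂ) + 2 * (D * Z).trace := by
    have : (((δ:ℂ) • 1 + D) * (ρ + Z)) + (((δ:ℂ) • 1 - D) * (ρ - Z))
        = (2:ℂ) • ((δ:ℂ) • ρ) + (2:ℂ) • (D * Z) := by
      simp only [mul_add, add_mul, mul_sub, sub_mul, smul_mul_assoc, one_mul]
      module
    rw [← trace_add, this, trace_add, trace_smul, trace_smul, trace_smul, htr]
    simp [smul_eq_mul]
    try ring
  have h4 : (0:ℝ) ≤ (2 * (δ:ℂ) + 2 * (D * Z).trace).re := by
    rw [← key, Complex.add_re]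
    exact add_nonneg e1 e2
  simp only [Complex.add_re, Complex.mul_re, Complex.re_ofNat, Complex.im_ofNat,
    Complex.ofReal_re, Complex.ofReal_im] at h4
  linarith

lemma sgn_mul_self (b : Bool) : ((sgn b : ℝ) : ℂ) * ((sgn b : ℝ) : ℂ) = 1 := by
  cases b <;> simp [sgn]

lemma sgn_not (b : Bool) : (sgn (!b) : ℝ) = - sgn b := by cases b <;> simp [sgn]

lemma sum_sgn_mul_ne {g : ℕ} {x y : Fin g} (hxy : x ≠ y) :
    ∑ η : Fin g → Bool, ((sgn (η x) : ℝ) : ℂ) * ((sgn (η y) : ℝ) : ℂ) = 0 := by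
  classical
  have hinv : Function.Involutive
      (fun η : Fin g → Bool => Function.update η x (!(η x))) := by
    intro η
    simp [Function.update_idem, Function.update_self, Function.update_eq_self]
  let e : Equiv.Perm (Fin g → Bool) := hinv.toPerm
  have hperm := Fintype.sum_equiv e
    (fun η => ((sgn (η x) : ℝ) : ℂ) * ((sgn (η y) : ℝ) : ℂ))
    (fun η => -(((sgn (η x) : ℝ) : ℂ) * ((sgn (η y) : ℝ) : ℂ)))
    (by
      intro η
      have hx : (e η) x = !(η x) := by
        simp [e, Function.Involutive.coe_toPerm]
      have hy : (e η) y = η y := by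
        simp [e, Function.Involutive.coe_toPerm, Function.update_of_ne (Ne.symm hxy)]
      simp only [hx, hy, sgn_not]
      push_cast
      ring)
  rw [Finset.sum_neg_distrib] at hperm
  linear_combination (hperm) / 2

lemma sum_sgn_mul {g : ℕ} (x y : Fin g) :
    ∑ η : Fin g → Bool, ((sgn (η x) : ℝ) : ℂ) * ((sgn (η y) : ℝ) : ℂ)
      = if x = y then ((2^g : ℕ) : ℂ) else 0 := by
  rcases eq_or_ne x y with rfl | h
  · simp only [if_pos rfl]
    rw [Finset.sum_congr rfl (fun η _ => sgn_mul_self (η x))]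
    simp [Finset.card_univ]
  · rw [if_neg h]
    exact sum_sgn_mul_ne h

lemma avg_identity {n g : ℕ} (C Y : Fin g → Matrix (Fin n) (Fin n) ℂ) :
    ∑ η : Fin g → Bool, ((∑ x, ((sgn (η x) : ℝ) : ℂ) • C x) * (∑ y, ((sgn (η y) : ℝ) : ℂ) • Y y))
      = ((2^g : ℕ) : ℂ) • ∑ x, C x * Y x := by
  classical
  have expand : ∀ η : Fin g → Bool,
      (∑ x, ((sgn (η x) : ℝ) : ℂ) • C x) * (∑ y, ((sgn (η y) : ℝ) : ℂ) • Y y)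
        = ∑ x, ∑ y, (((sgn (η x) : ℝ) : ℂ) * ((sgn (η y) : ℝ) : ℂ)) • (C x * Y y) := by
    intro η
    rw [Finset.sum_mul]
    refine Finset.sum_congr rfl fun x _ => ?_
    rw [Finset.mul_sum]
    refine Finset.sum_congr rfl fun y _ => ?_
    rw [smul_mul_assoc, mul_smul_comm, smul_smul]
  calc ∑ η : Fin g → Bool, ((∑ x, ((sgn (η x) : ℝ) : ℂ) • C x) * (∑ y, ((sgn (η y) : ℝ) : ℂ) • Y y))
      = ∑ η : Fin g → Bool, ∑ x, ∑ y, (((sgn (η x) : ℝ) : ℂ) * ((sgn (η y) : ℝ) : ℂ)) • (C x * Y y) :=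
        Finset.sum_congr rfl fun η _ => expand η
    _ = ∑ x, ∑ y, ∑ η : Fin g → Bool, (((sgn (η x) : ℝ) : ℂ) * ((sgn (η y) : ℝ) : ℂ)) • (C x * Y y) := by
        rw [Finset.sum_comm]
        refine Finset.sum_congr rfl fun x _ => Finset.sum_comm
    _ = ∑ x, ∑ y, (if x = y then ((2^g : ℕ) : ℂ) else 0) • (C x * Y y) := by
        refine Finset.sum_congr rfl fun x _ => Finset.sum_congr rfl fun y _ => ?_
        rw [← Finset.sum_smul, sum_sgn_mul]
    _ = ((2^g : ℕ) : ℂ) • ∑ x, C x * Y x := by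
        rw [Finset.smul_sum]
        refine Finset.sum_congr rfl fun x _ => ?_
        simp [ite_smul]

lemma fin2_ne_zero_iff (i : Fin 2) : i = 1 ↔ ¬ i = 0 := by
  fin_cases i <;> simp

lemma compat_value_le {n g : ℕ} (A : Fin g → Matrix (Fin n) (Fin n) ℂ) (t : ℝ)
    (hc : Compatible fun x => noisyPair t (A x))
    (Y : Fin g → Matrix (Fin n) (Fin n) ℂ) (ρ : Matrix (Fin n) (Fin n) ℂ)
    (htr : ρ.trace = 1)
    (hcon : ∀ ε : Fin g → Bool, loewnerLE (∑ x, ((sgn (ε x) : ℝ) : ℂ) • Y x) ρ) :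
    t * (∑ x, (A x * Y x).trace).re ≤ 1 := by
  classical
  obtain ⟨J, hJpos, hJsum, hmarg⟩ := hc
  have hsub : ∀ x, (t:ℂ) • A x
      = ∑ f : Fin g → Fin 2, ((sgn (f x = 0) : ℝ) : ℂ) • J f := by
    intro x
    have h0 : (2⁻¹ : ℂ) • (1 + (t:ℂ) • A x)
        = ∑ f ∈ Finset.univ.filter (fun f : Fin g → Fin 2 => f x = 0), J f := by
      have := hmarg x 0
      simpa [noisyPair] using this
    have h1 : (2⁻¹ : ℂ) • (1 - (t:ℂ) • A x)
        = ∑ f ∈ Finset.univ.filter (fun f : Fin g → Fin 2 => ¬ f x = 0), J f := by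
      have := hmarg x 1
      simp only [noisyPair] at this
      rw [Finset.filter_congr (fun f _ => by rw [← fin2_ne_zero_iff])]
      simpa using this
    have hid : (t:ℂ) • A x
        = (2⁻¹ : ℂ) • (1 + (t:ℂ) • A x) - (2⁻¹ : ℂ) • (1 - (t:ℂ) • A x) := by
      module
    rw [hid, h0, h1]
    rw [← Finset.sum_filter_add_sum_filter_not Finset.univ (fun f : Fin g → Fin 2 => f x = 0)
      (fun f => ((sgn (f x = 0) : ℝ) : ℂ) • J f)]
    have e0 : ∑ f ∈ Finset.univ.filter (fun f : Fin g → Fin 2 => f x = 0),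
        ((sgn (f x = 0) : ℝ) : ℂ) • J f
        = ∑ f ∈ Finset.univ.filter (fun f : Fin g → Fin 2 => f x = 0), J f := by
      refine Finset.sum_congr rfl fun f hf => ?_
      have := (Finset.mem_filter.mp hf).2
      simp [this, sgn]
    have e1 : ∑ f ∈ Finset.univ.filter (fun f : Fin g → Fin 2 => ¬ f x = 0),
        ((sgn (f x = 0) : ℝ) : ℂ) • J f
        = -∑ f ∈ Finset.univ.filter (fun f : Fin g → Fin 2 => ¬ f x = 0), J f := by
      rw [← Finset.sum_neg_distrib]
      refine Finset.sum_congr rfl fun f hf => ?_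
      have := (Finset.mem_filter.mp hf).2
      simp [this, sgn]
    rw [e0, e1]
    abel
  -- main chain
  have key : (t:ℝ) * (∑ x, (A x * Y x).trace).re
      = (∑ f : Fin g → Fin 2,
          (J f * (∑ x, ((sgn (decide (f x = 0)) : ℝ) : ℂ) • Y x)).trace).re := by
    have e2 : ((t:ℂ) * ∑ x, (A x * Y x).trace)
        = ∑ f : Fin g → Fin 2,
            (J f * (∑ x, ((sgn (decide (f x = 0)) : ℝ) : ℂ) • Y x)).trace := by
      calc (t:ℂ) * ∑ x, (A x * Y x).trace
          = ∑ x, (((t:ℂ) • A x) * Y x).trace := by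
            rw [Finset.mul_sum]
            refine Finset.sum_congr rfl fun x _ => ?_
            rw [smul_mul_assoc, trace_smul, smul_eq_mul]
        _ = ∑ x, ∑ f : Fin g → Fin 2, ((sgn (decide (f x = 0)) : ℝ) : ℂ)
              * (J f * Y x).trace := by
            refine Finset.sum_congr rfl fun x _ => ?_
            rw [hsub x, Finset.sum_mul, trace_sum]
            refine Finset.sum_congr rfl fun f _ => ?_
            rw [smul_mul_assoc, trace_smul, smul_eq_mul]
        _ = ∑ f : Fin g → Fin 2, ∑ x, ((sgn (decide (f x = 0)) : ℝ) : ℂ)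
              * (J f * Y x).trace := Finset.sum_comm
        _ = ∑ f : Fin g → Fin 2,
            (J f * (∑ x, ((sgn (decide (f x = 0)) : ℝ) : ℂ) • Y x)).trace := by
            refine Finset.sum_congr rfl fun f _ => ?_
            rw [Finset.mul_sum, trace_sum]
            refine Finset.sum_congr rfl fun x _ => ?_
            rw [mul_smul_comm, trace_smul, smul_eq_mul]
    have := congrArg Complex.re e2
    rwa [Complex.re_ofReal_mul] at this
  rw [key]
  have hbound : ∀ f : Fin g → Fin 2,
      (J f * (∑ x, ((sgn (decide (f x = 0)) : ℝ) : ℂ) • Y x)).trace.re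
        ≤ (J f * ρ).trace.re :=
    fun f => trace_mono (hJpos f) (hcon (fun x => decide (f x = 0)))
  calc (∑ f : Fin g → Fin 2,
          (J f * (∑ x, ((sgn (decide (f x = 0)) : ℝ) : ℂ) • Y x)).trace).re
      = ∑ f : Fin g → Fin 2,
          ((J f * (∑ x, ((sgn (decide (f x = 0)) : ℝ) : ℂ) • Y x)).trace).re :=
        Complex.re_sum _ _
    _ ≤ ∑ f : Fin g → Fin 2, ((J f * ρ).trace).re := Finset.sum_le_sum fun f _ => hbound f
    _ = ((∑ f : Fin g → Fin 2, J f * ρ).trace).re := by rw [← Complex.re_sum, trace_sum]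
    _ = 1 := by
        rw [← Finset.sum_mul, hJsum, one_mul, htr]
        simp

lemma opNorm_nonneg {n e : ℕ} (C : Matrix (Fin n) (Fin e) ℂ) : 0 ≤ opNorm C :=
  Real.sqrt_nonneg _

lemma sum_trace_ge_neg_opNorm {n g : ℕ} {C Y : Fin g → Matrix (Fin n) (Fin n) ℂ}
    {ρ : Matrix (Fin n) (Fin n) ℂ}
    (hC : ∀ x, (C x).IsHermitian) (htr : ρ.trace = 1)
    (hcon : ∀ ε : Fin g → Bool, loewnerLE (∑ x, ((sgn (ε x) : ℝ) : ℂ) • Y x) ρ) :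
    -(∑ x, opNorm (C x)) ≤ (∑ x, (C x * Y x).trace).re := by
  classical
  set δ : ℝ := ∑ x, opNorm (C x) with hδ
  have hminus : ∀ x, (((opNorm (C x) : ℝ) : ℂ) • 1 - C x).PosSemidef := fun x =>
    psd_of_rayleigh_le (hC x) fun v hv => (abs_le.mp (rayleigh_abs_le_opNorm (hC x) hv)).2
  have hplus : ∀ x, (((opNorm (C x) : ℝ) : ℂ) • 1 + C x).PosSemidef := by
    intro x
    have h := psd_of_rayleigh_le (hC x).neg (δ := opNorm (C x)) (fun v hv => ?_)
    · simpa [sub_neg_eq_add] using h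
    · have : star v ⬝ᵥ ((-C x) *ᵥ v) = -(star v ⬝ᵥ (C x *ᵥ v)) := by
        rw [neg_mulVec, dotProduct_neg]
      rw [this, Complex.neg_re, neg_le]
      have := (abs_le.mp (rayleigh_abs_le_opNorm (hC x) hv)).1
      linarith
  -- per-sign bound
  have hper : ∀ η : Fin g → Bool,
      -δ ≤ ((∑ x, ((sgn (η x) : ℝ) : ℂ) • C x) * (∑ x, ((sgn (η x) : ℝ) : ℂ) • Y x)).trace.re := by
    intro η
    have hone : ((δ : ℝ) : ℂ) • (1 : Matrix (Fin n) (Fin n) ℂ)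
        = ∑ x, ((opNorm (C x) : ℝ) : ℂ) • (1 : Matrix (Fin n) (Fin n) ℂ) := by
      rw [← Finset.sum_smul, hδ]
      push_cast
      rfl
    have hD1 : (((δ : ℝ) : ℂ) • 1 - ∑ x, ((sgn (η x) : ℝ) : ℂ) • C x).PosSemidef := by
      rw [hone, ← Finset.sum_sub_distrib]
      refine psd_sum fun x => ?_
      cases hη : η x
      · simpa [sgn, hη, sub_neg_eq_add] using hplus x
      · simpa [sgn, hη] using hminus x
    have hD2 : (((δ : ℝ) : ℂ) • 1 + ∑ x, ((sgn (η x) : ℝ) : ℂ) • C x).PosSemidef := by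
      rw [hone, ← Finset.sum_add_distrib]
      refine psd_sum fun x => ?_
      cases hη : η x
      · simpa [sgn, hη, sub_neg_eq_add, ← sub_eq_add_neg] using hminus x
      · simpa [sgn, hη] using hplus x
    have hZ' : loewnerLE (-(∑ x, ((sgn (η x) : ℝ) : ℂ) • Y x)) ρ := by
      have : -(∑ x, ((sgn (η x) : ℝ) : ℂ) • Y x)
          = ∑ x, ((sgn ((!(η x)) : Bool) : ℝ) : ℂ) • Y x := by
        rw [← Finset.sum_neg_distrib]
        refine Finset.sum_congr rfl fun x _ => ?_
        rw [sgn_not]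
        push_cast
        rw [neg_smul]
      rw [this]
      exact hcon (fun x => !(η x))
    exact retrace_ge_neg hD1 hD2 (hcon η) hZ' htr
  -- sum over η
  have hsum : -( (2^g : ℝ) * δ) ≤ (2^g : ℝ) * (∑ x, (C x * Y x).trace).re := by
    have h1 : ∑ _η : Fin g → Bool, (-δ) ≤ ∑ η : Fin g → Bool,
        ((∑ x, ((sgn (η x) : ℝ) : ℂ) • C x) * (∑ x, ((sgn (η x) : ℝ) : ℂ) • Y x)).trace.re :=
      Finset.sum_le_sum fun η _ => hper η
    have h2 : ∑ _η : Fin g → Bool, (-δ) = -((2^g : ℝ) * δ) := by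
      rw [Finset.sum_const]
      simp [Finset.card_univ]
      try ring
    have h3 : ∑ η : Fin g → Bool,
        ((∑ x, ((sgn (η x) : ℝ) : ℂ) • C x) * (∑ x, ((sgn (η x) : ℝ) : ℂ) • Y x)).trace.re
        = (2^g : ℝ) * (∑ x, (C x * Y x).trace).re := by
      rw [← Complex.re_sum, ← trace_sum, avg_identity, trace_smul, smul_eq_mul]
      have hc2 : ((2^g : ℕ) : ℂ) = (((2^g : ℝ) : ℝ) : ℂ) := by push_cast; ring
      rw [hc2, Complex.re_ofReal_mul, trace_sum]
    rw [h2] at h1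
    rw [h3] at h1
    exact h1
  have hpow : (0:ℝ) < 2^g := by positivity
  nlinarith [hsum, hpow]

lemma loewner_conj {n m : ℕ} {X Z : Matrix (Fin n) (Fin n) ℂ} (h : loewnerLE X Z)
    (V : Matrix (Fin m) (Fin n) ℂ) : loewnerLE (V * X * Vᴴ) (V * Z * Vᴴ) := by
  unfold loewnerLE at *
  have : V * Z * Vᴴ - V * X * Vᴴ = V * (Z - X) * Vᴴ := by
    rw [Matrix.mul_sub, Matrix.sub_mul]
  rw [this]
  exact h.mul_mul_conjTranspose_same V


end AuxLemmas

/-- if a compression of the tuple `A` is `ε`-close to a tuple `B` with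
`λ(B) = √g`, then `τ(A) ≤ 1/(√g - ε)`. -/
theorem stmt4 {d g k : ℕ} (hd : 1 ≤ d) (hg : 1 ≤ g) (hk : 1 ≤ k)
    (B : Fin g → Matrix (Fin k) (Fin k) ℂ)
    (hB : ∀ x, (B x).IsHermitian ∧ loewnerLE (-1) (B x) ∧ loewnerLE (B x) 1)
    (hlamB : lambdaSDP B = Real.sqrt g)
    (A : Fin g → Matrix (Fin d) (Fin d) ℂ)
    (hA : ∀ x, (A x).IsHermitian ∧ loewnerLE (-1) (A x) ∧ loewnerLE (A x) 1)
    (V : Matrix (Fin d) (Fin k) ℂ) (hV : Vᴴ * V = 1)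
    (ε : ℝ) (hε0 : 0 < ε) (hεg : ε < Real.sqrt g)
    (happrox : ∑ x, opNorm (Vᴴ * A x * V - B x) ≤ ε) :
    tau A ≤ 1 / (Real.sqrt g - ε) := by
  classical
  have hg0 : (0:ℝ) < Real.sqrt g - ε := by linarith
  refine Real.sSup_le (fun t ht => ?_) (by positivity)
  obtain ⟨ht0, ht1, hcomp⟩ := ht
  rw [le_div_iff₀ hg0]
  refine le_of_forall_pos_le_add (fun δ hδ => ?_)
  -- nonempty feasible set for B
  have hne : {r : ℝ | ∃ (Y : Fin g → Matrix (Fin k) (Fin k) ℂ) (ρ : Matrix (Fin k) (Fin k) ℂ),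
      (∀ x, (Y x).IsHermitian) ∧ ρ.PosSemidef ∧ ρ.trace = 1 ∧
      (∀ ε' : Fin g → Bool, loewnerLE (∑ x, (sgn (ε' x) : ℂ) • Y x) ρ) ∧
      r = (∑ x, (B x * Y x).trace).re}.Nonempty := by
    refine ⟨0, fun _ => 0, Matrix.diagonal (fun i => if i = (⟨0, hk⟩ : Fin k) then 1 else 0),
      fun _ => Matrix.isHermitian_zero, ?_, ?_, ?_, ?_⟩
    · refine Matrix.PosSemidef.diagonal ?_
      intro i
      dsimp only
      split <;> simp
    · rw [Matrix.trace_diagonal]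
      simp
    · intro ε'
      unfold loewnerLE
      simp only [smul_zero, Finset.sum_const_zero, sub_zero]
      refine Matrix.PosSemidef.diagonal ?_
      intro i
      dsimp only
      split <;> simp
    · simp
  have hlt : Real.sqrt g - δ < sSup {r : ℝ | ∃ (Y : Fin g → Matrix (Fin k) (Fin k) ℂ)
      (ρ : Matrix (Fin k) (Fin k) ℂ),
      (∀ x, (Y x).IsHermitian) ∧ ρ.PosSemidef ∧ ρ.trace = 1 ∧
      (∀ ε' : Fin g → Bool, loewnerLE (∑ x, (sgn (ε' x) : ℂ) • Y x) ρ) ∧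
      r = (∑ x, (B x * Y x).trace).re} := by
    have : sSup _ = Real.sqrt g := hlamB
    rw [show sSup {r : ℝ | ∃ (Y : Fin g → Matrix (Fin k) (Fin k) ℂ)
      (ρ : Matrix (Fin k) (Fin k) ℂ),
      (∀ x, (Y x).IsHermitian) ∧ ρ.PosSemidef ∧ ρ.trace = 1 ∧
      (∀ ε' : Fin g → Bool, loewnerLE (∑ x, (sgn (ε' x) : ℂ) • Y x) ρ) ∧
      r = (∑ x, (B x * Y x).trace).re} = lambdaSDP B from rfl, hlamB]
    linarith
  obtain ⟨r, hrS, hrgt⟩ := exists_lt_of_lt_csSup hne hlt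
  obtain ⟨Y, ρ, hYh, hρ, hρtr, hconB, hrval⟩ := hrS
  set Yt : Fin g → Matrix (Fin d) (Fin d) ℂ := fun x => V * Y x * Vᴴ with hYt
  set ρt : Matrix (Fin d) (Fin d) ℂ := V * ρ * Vᴴ with hρt
  have htrρt : ρt.trace = 1 := by
    rw [hρt, Matrix.trace_mul_cycle, hV, Matrix.one_mul, hρtr]
  have hconA : ∀ ε' : Fin g → Bool, loewnerLE (∑ x, ((sgn (ε' x) : ℝ) : ℂ) • Yt x) ρt := by
    intro ε'
    have hre : ∑ x, ((sgn (ε' x) : ℝ) : ℂ) • Yt x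
        = V * (∑ x, ((sgn (ε' x) : ℝ) : ℂ) • Y x) * Vᴴ := by
      rw [Matrix.mul_sum, Matrix.sum_mul]
      refine Finset.sum_congr rfl fun x _ => ?_
      simp only [hYt]
      rw [Matrix.mul_smul, Matrix.smul_mul]
    rw [hre]
    exact loewner_conj (hconB ε') V
  have h1 : t * (∑ x, (A x * Yt x).trace).re ≤ 1 :=
    compat_value_le A t hcomp Yt ρt htrρt hconA
  -- value transfer
  set C : Fin g → Matrix (Fin k) (Fin k) ℂ := fun x => Vᴴ * A x * V - B x with hC
  have hCh : ∀ x, (C x).IsHermitian := fun x =>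
    ((Matrix.isHermitian_conjTranspose_mul_mul V (hA x).1).sub (hB x).1)
  have htr_eq : ∀ x, (A x * Yt x).trace = (B x * Y x).trace + (C x * Y x).trace := by
    intro x
    have e1 : (A x * Yt x).trace = ((Vᴴ * A x * V) * Y x).trace := by
      rw [hYt]
      dsimp only
      rw [show A x * (V * Y x * Vᴴ) = (A x * V * Y x) * Vᴴ by simp only [Matrix.mul_assoc],
        Matrix.trace_mul_comm]
      congr 1
      simp only [Matrix.mul_assoc]
    rw [e1, hC]
    have : (Vᴴ * A x * V) * Y x = B x * Y x + (Vᴴ * A x * V - B x) * Y x := by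
      rw [sub_mul]; abel
    rw [this, trace_add]
  have hval : r - ε ≤ (∑ x, (A x * Yt x).trace).re := by
    have hCbound : -(∑ x, opNorm (C x)) ≤ (∑ x, (C x * Y x).trace).re :=
      sum_trace_ge_neg_opNorm hCh hρtr hconB
    have hCε : ∑ x, opNorm (C x) ≤ ε := happrox
    have hsplit : (∑ x, (A x * Yt x).trace).re
        = (∑ x, (B x * Y x).trace).re + (∑ x, (C x * Y x).trace).re := by
      rw [← Complex.add_re, ← Finset.sum_add_distrib]
      congr 1
      exact Finset.sum_congr rfl fun x _ => htr_eq x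
    rw [hsplit, ← hrval]
    linarith
  have hm : t * (Real.sqrt g - δ - ε) ≤ t * (∑ x, (A x * Yt x).trace).re :=
    mul_le_mul_of_nonneg_left (by linarith) ht0
  nlinarith [mul_le_mul_of_nonneg_right ht1 hδ.le]
end

section
/- Let m, n ∈ ℝ³ with ‖m‖ ≤ 1, ‖n‖ ≤ 1 and (m, n) ≠ (0, 0), and define the unbiased qubit observables M = m_1 X + m_2 Y + m_3 Z and N = n_1 X + n_2 Y + n_3 Z. Then τ(M, N) = min(1, 2/(‖m+n‖ + ‖m−n‖)), where ‖·‖ is the Euclidean norm on ℝ³. -/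
open Matrix MeasureTheory Filter
open scoped BigOperators ComplexOrder

/-- Euclidean norm on `ℝ³`. -/
noncomputable def enorm3 (v : Fin 3 → ℝ) : ℝ := Real.sqrt (∑ i, v i ^ 2)


/-! ### Auxiliary machinery for `stmt5` -/

noncomputable section S5Aux
namespace S5

set_option maxHeartbeats 1000000


def qmat (s : ℝ) (v : Fin 3 → ℝ) : Matrix (Fin 2) (Fin 2) ℂ :=
  !![(s + v 2 : ℝ), (v 0 : ℝ) - (v 1 : ℝ) * Complex.I;
     (v 0 : ℝ) + (v 1 : ℝ) * Complex.I, (s - v 2 : ℝ)]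

lemma enorm3_nonneg (v : Fin 3 → ℝ) : 0 ≤ enorm3 v := Real.sqrt_nonneg _

lemma sq_enorm3 (v : Fin 3 → ℝ) : enorm3 v ^ 2 = v 0 ^ 2 + v 1 ^ 2 + v 2 ^ 2 := by
  rw [enorm3, Real.sq_sqrt] <;> [rw [Fin.sum_univ_three]; positivity]

lemma enorm3_abs_smul (r : ℝ) (v : Fin 3 → ℝ) : enorm3 (r • v) = |r| * enorm3 v := by
  rw [enorm3, enorm3, show ∑ i, (r • v) i ^ 2 = r ^ 2 * ∑ i, v i ^ 2 by
    rw [Fin.sum_univ_three, Fin.sum_univ_three]; simp [Pi.smul_apply, smul_eq_mul]; ring]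
  rw [Real.sqrt_mul (sq_nonneg r), Real.sqrt_sq_eq_abs]

lemma enorm3_smul {r : ℝ} (hr : 0 ≤ r) (v : Fin 3 → ℝ) : enorm3 (r • v) = r * enorm3 v := by
  rw [enorm3_abs_smul, _root_.abs_of_nonneg hr]

lemma enorm3_neg (v : Fin 3 → ℝ) : enorm3 (-v) = enorm3 v := by
  rw [show -v = (-1 : ℝ) • v by funext i; simp, enorm3_abs_smul]; norm_num

lemma enorm3_eq_zero {v : Fin 3 → ℝ} (h : enorm3 v = 0) : v = 0 := by
  have h2 : v 0 ^ 2 + v 1 ^ 2 + v 2 ^ 2 = 0 := by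
    have := sq_enorm3 v; rw [h] at this; linarith [this]
  have e0 : v 0 = 0 := by nlinarith [sq_nonneg (v 0), sq_nonneg (v 1), sq_nonneg (v 2)]
  have e1 : v 1 = 0 := by nlinarith [sq_nonneg (v 0), sq_nonneg (v 1), sq_nonneg (v 2)]
  have e2 : v 2 = 0 := by nlinarith [sq_nonneg (v 0), sq_nonneg (v 1), sq_nonneg (v 2)]
  funext i
  fin_cases i
  · exact e0
  · exact e1
  · exact e2

lemma enorm3_sub_le (a b : Fin 3 → ℝ) : enorm3 (a - b) ≤ enorm3 a + enorm3 b := by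
  have key : ∀ x : Fin 3 → ℝ, enorm3 x = ‖(WithLp.equiv 2 (Fin 3 → ℝ)).symm x‖ := by
    intro x
    rw [EuclideanSpace.norm_eq, enorm3]
    congr 1
    refine Finset.sum_congr rfl fun i _ => ?_
    rw [Real.norm_eq_abs, _root_.sq_abs]
    rfl
  rw [key, key, key]
  have : (WithLp.equiv 2 (Fin 3 → ℝ)).symm (a - b)
      = (WithLp.equiv 2 (Fin 3 → ℝ)).symm a
        - (WithLp.equiv 2 (Fin 3 → ℝ)).symm b := rfl
  rw [this]
  exact norm_sub_le _ _

/-! Basic algebra of `qmat`. -/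

lemma qmat_add (s s' : ℝ) (v v' : Fin 3 → ℝ) :
    qmat s v + qmat s' v' = qmat (s + s') (v + v') := by
  ext i j; fin_cases i <;> fin_cases j <;> simp [qmat] <;> ring

lemma qmat_sub (s s' : ℝ) (v v' : Fin 3 → ℝ) :
    qmat s v - qmat s' v' = qmat (s - s') (v - v') := by
  ext i j; fin_cases i <;> fin_cases j <;> simp [qmat] <;> push_cast <;> ring

lemma qmat_one : qmat 1 0 = 1 := by
  ext i j; fin_cases i <;> fin_cases j <;> simp [qmat, Matrix.one_apply]

lemma smul_qmat (r s : ℝ) (v : Fin 3 → ℝ) :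
    (r : ℂ) • qmat s v = qmat (r * s) (r • v) := by
  ext i j; fin_cases i <;> fin_cases j <;> simp [qmat] <;> ring

lemma qmat_congr {s s' : ℝ} {v v' : Fin 3 → ℝ} (hs : s = s') (hv : v = v') :
    qmat s v = qmat s' v' := by rw [hs, hv]

lemma qmat_herm (s : ℝ) (v : Fin 3 → ℝ) : (qmat s v).IsHermitian := by
  unfold Matrix.IsHermitian
  ext i j
  fin_cases i <;> fin_cases j <;> simp [qmat, Complex.ext_iff]

lemma key (w s v0 v1 v2 P Q R N : ℝ) (hw : 0 ≤ w) (hws : w ≤ s)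
    (hsq : w ^ 2 = v0 ^ 2 + v1 ^ 2 + v2 ^ 2) (hhopf : P ^ 2 + Q ^ 2 + R ^ 2 = N ^ 2)
    (hN : 0 ≤ N) : 0 ≤ s * N + (v2 * P + v0 * Q + v1 * R) := by
  have hCS : (v2 * P + v0 * Q + v1 * R) ^ 2 ≤ (w * N) ^ 2 := by
    nlinarith [sq_nonneg (v2 * Q - v0 * P), sq_nonneg (v2 * R - v1 * P),
      sq_nonneg (v0 * R - v1 * Q)]
  have hsN : w * N ≤ s * N := mul_le_mul_of_nonneg_right hws hN
  have hwN : 0 ≤ w * N := mul_nonneg hw hN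
  have hfact : (v2 * P + v0 * Q + v1 * R) ^ 2 ≤ (s * N) ^ 2 :=
    hCS.trans (by nlinarith)
  nlinarith [hfact, hwN, hsN]

lemma qmat_psd {s : ℝ} {v : Fin 3 → ℝ} (h : enorm3 v ≤ s) : (qmat s v).PosSemidef := by
  refine posSemidef_iff_dotProduct_mulVec.mpr ⟨qmat_herm s v, fun x => ?_⟩
  have hw : 0 ≤ enorm3 v := enorm3_nonneg v
  have hsq := sq_enorm3 v
  set a := (x 0).re; set b := (x 0).im; set c := (x 1).re; set d := (x 1).im
  have hre : (star x ⬝ᵥ qmat s v *ᵥ x).re =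
      s * (a^2+b^2+c^2+d^2) + (v 2 * (a^2+b^2-c^2-d^2)
        + v 0 * (2*(a*c+b*d)) + v 1 * (2*(a*d-b*c))) := by
    simp [dotProduct, mulVec, qmat, Fin.sum_univ_two, Complex.add_re, Complex.mul_re,
      Complex.mul_im]
    ring
  have him : (star x ⬝ᵥ qmat s v *ᵥ x).im = 0 := by
    simp [dotProduct, mulVec, qmat, Fin.sum_univ_two, Complex.add_im, Complex.mul_re,
      Complex.mul_im]
    ring
  rw [Complex.le_def]
  refine ⟨?_, by rw [Complex.zero_im, him]⟩
  rw [Complex.zero_re, hre]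
  exact key (enorm3 v) s (v 0) (v 1) (v 2) _ _ _ _ hw h hsq (by ring) (by positivity)

/-! Bloch decomposition bounds for PSD matrices. -/

def scalarOf (G : Matrix (Fin 2) (Fin 2) ℂ) : ℝ := (G 0 0).re + (G 1 1).re

def vecOf (G : Matrix (Fin 2) (Fin 2) ℂ) : Fin 3 → ℝ :=
  ![(G 0 1).re + (G 1 0).re, (G 1 0).im - (G 0 1).im, (G 0 0).re - (G 1 1).re]

lemma scalarOf_add (A B : Matrix (Fin 2) (Fin 2) ℂ) :
    scalarOf (A + B) = scalarOf A + scalarOf B := by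
  simp [scalarOf, Matrix.add_apply]; ring

lemma vecOf_add (A B : Matrix (Fin 2) (Fin 2) ℂ) :
    vecOf (A + B) = vecOf A + vecOf B := by
  funext i; fin_cases i <;> simp [vecOf, Matrix.add_apply] <;> ring

lemma scalarOf_qmat (s : ℝ) (v : Fin 3 → ℝ) : scalarOf (qmat s v) = 2 * s := by
  simp [scalarOf, qmat]; ring

lemma vecOf_qmat (s : ℝ) (v : Fin 3 → ℝ) : vecOf (qmat s v) = (2 : ℝ) • v := by
  funext i; fin_cases i <;> simp [vecOf, qmat] <;> ring

lemma psd_bound {G : Matrix (Fin 2) (Fin 2) ℂ} (hG : G.PosSemidef) :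
    enorm3 (vecOf G) ≤ scalarOf G := by
  obtain ⟨hH, hpos⟩ := posSemidef_iff_dotProduct_mulVec.mp hG
  have h01 : G 0 1 = starRingEnd ℂ (G 1 0) := by
    have := congr_fun (congr_fun hH 0) 1
    simpa [Matrix.conjTranspose_apply] using this.symm
  have h00im : (G 0 0).im = 0 := by
    have := congr_fun (congr_fun hH 0) 0
    simp [Matrix.conjTranspose_apply, Complex.ext_iff] at this
    linarith [this]
  have h11im : (G 1 1).im = 0 := by
    have := congr_fun (congr_fun hH 1) 1
    simp [Matrix.conjTranspose_apply, Complex.ext_iff] at this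
    linarith [this]
  set p := (G 0 0).re with hp'
  set q := (G 1 1).re with hq'
  set g := G 1 0 with hg'
  have hp : 0 ≤ p := by
    have := hpos ![1, 0]
    rw [Complex.le_def] at this
    simpa [dotProduct, mulVec, Fin.sum_univ_two] using this.1
  have hq : 0 ≤ q := by
    have := hpos ![0, 1]
    rw [Complex.le_def] at this
    simpa [dotProduct, mulVec, Fin.sum_univ_two] using this.1
  set w := g.re ^ 2 + g.im ^ 2 with hw'
  have hw0 : 0 ≤ w := by positivity
  have hquad : ∀ r : ℝ, 0 ≤ p * (r * r) + (-2 * w) * r + q * w := by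
    intro r
    have := hpos ![(r : ℂ), -g]
    rw [Complex.le_def] at this
    have hre := this.1
    rw [Complex.zero_re] at hre
    refine le_trans hre (le_of_eq ?_)
    simp [dotProduct, mulVec, Fin.sum_univ_two, h01, Complex.add_re, Complex.mul_re,
      Complex.mul_im, Complex.ext_iff, hw']
    ring
  have hdisc : discrim p (-2 * w) (q * w) ≤ 0 := discrim_le_zero hquad
  rw [discrim] at hdisc
  have hwpq : w ≤ p * q := by
    rcases eq_or_lt_of_le hw0 with h0 | h0
    · rw [← h0]; positivity
    · nlinarith [hdisc, h0]
  have : enorm3 (vecOf G) ≤ Real.sqrt ((p + q) ^ 2) := by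
    apply Real.sqrt_le_sqrt
    rw [Fin.sum_univ_three]
    simp only [vecOf, h01]
    simp [Complex.ext_iff]
    nlinarith [hwpq]
  rw [Real.sqrt_sq (by linarith)] at this
  exact this

/-! Enumerating `Fin 2 → Fin 2`. -/

lemma sum_funtype {M : Type*} [AddCommMonoid M] (F : (Fin 2 → Fin 2) → M) :
    ∑ f, F f = F ![0,0] + F ![0,1] + F ![1,0] + F ![1,1] := by
  have hfe : ∀ f : Fin 2 → Fin 2, ![f 0, f 1] = f := by
    intro f; funext k; fin_cases k <;> rfl
  have h1 : ∑ f, F f = ∑ p : Fin 2 × Fin 2, F ![p.1, p.2] := by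
    refine Fintype.sum_equiv (piFinTwoEquiv fun _ => Fin 2) _ _ fun f => ?_
    rw [show (piFinTwoEquiv fun _ => Fin 2) f = (f 0, f 1) from rfl, hfe]
  rw [h1, Fintype.sum_prod_type, Fin.sum_univ_two, Fin.sum_univ_two, Fin.sum_univ_two]
  simp [add_assoc]

lemma sum_filter_fun (F : (Fin 2 → Fin 2) → Matrix (Fin 2) (Fin 2) ℂ) (x i : Fin 2) :
    ∑ f ∈ Finset.univ.filter (fun f : Fin 2 → Fin 2 => f x = i), F f
      = ∑ f : Fin 2 → Fin 2, if f x = i then F f else 0 :=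
  Finset.sum_filter _ _

lemma pauliExp (m : Fin 3 → ℝ) :
    m 0 • PauliX + m 1 • PauliY + m 2 • PauliZ = qmat 0 m := by
  ext i j
  fin_cases i <;> fin_cases j <;>
    simp [PauliX, PauliY, PauliZ, qmat, Matrix.add_apply, Complex.ext_iff, Complex.real_smul] <;>
    ring

lemma noisy0 (t : ℝ) (m : Fin 3 → ℝ) :
    noisyPair t (qmat 0 m) 0 = qmat (1/2) (((1:ℝ)/2) • (t • m)) := by
  show (2⁻¹ : ℂ) • (1 + (t : ℂ) • qmat 0 m) = _
  rw [smul_qmat t 0 m, mul_zero, ← qmat_one, qmat_add,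
    show (2⁻¹ : ℂ) = (((1:ℝ)/2 : ℝ) : ℂ) by norm_num, smul_qmat]
  exact qmat_congr (by norm_num) (by funext i; simp)

lemma noisy1 (t : ℝ) (m : Fin 3 → ℝ) :
    noisyPair t (qmat 0 m) 1 = qmat (1/2) ((-(1:ℝ)/2) • (t • m)) := by
  show (2⁻¹ : ℂ) • (1 - (t : ℂ) • qmat 0 m) = _
  rw [smul_qmat t 0 m, mul_zero, ← qmat_one, qmat_sub,
    show (2⁻¹ : ℂ) = (((1:ℝ)/2 : ℝ) : ℂ) by norm_num, smul_qmat]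
  exact qmat_congr (by norm_num) (by funext i; simp; ring)

/-! ### Necessity -/

lemma necessity {t : ℝ} (ht : 0 ≤ t) (m n : Fin 3 → ℝ)
    (hc : Compatible fun x => noisyPair t (![qmat 0 m, qmat 0 n] x)) :
    t * (enorm3 (m + n) + enorm3 (m - n)) ≤ 2 := by
  obtain ⟨J, hpsd, hsum, hmarg⟩ := hc
  -- total sum
  have htot := congrArg vecOf (sum_funtype J ▸ hsum)
  have htots := congrArg scalarOf (sum_funtype J ▸ hsum)
  rw [← qmat_one, vecOf_qmat] at htot
  rw [← qmat_one, scalarOf_qmat] at htots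
  rw [vecOf_add, vecOf_add, vecOf_add] at htot
  rw [scalarOf_add, scalarOf_add, scalarOf_add] at htots
  -- marginal for x = 0, i = 0
  have hm0 := hmarg 0 0
  have hm1 := hmarg 1 0
  simp only [Matrix.cons_val_zero, Matrix.cons_val_one, Matrix.head_cons] at hm0 hm1
  rw [sum_filter_fun, sum_funtype] at hm0 hm1
  norm_num at hm0 hm1
  rw [noisy0] at hm0
  rw [noisy0] at hm1
  have hv0 := congrArg vecOf hm0
  have hv1 := congrArg vecOf hm1
  rw [vecOf_qmat, vecOf_add] at hv0 hv1
  -- venorm notation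
  set g00 := vecOf (J ![0,0])
  set g01 := vecOf (J ![0,1])
  set g10 := vecOf (J ![1,0])
  set g11 := vecOf (J ![1,1])
  have hA : t • (m + n) = g00 - g11 := by
    funext i
    have e0 := congr_fun htot i
    have e1 := congr_fun hv0 i
    have e2 := congr_fun hv1 i
    simp only [Pi.add_apply, Pi.sub_apply, Pi.smul_apply, smul_eq_mul, Pi.zero_apply] at *
    nlinarith [e0, e1, e2]
  have hB : t • (m - n) = g01 - g10 := by
    funext i
    have e1 := congr_fun hv0 i
    have e2 := congr_fun hv1 i
    simp only [Pi.sub_apply, Pi.smul_apply, smul_eq_mul, Pi.add_apply] at *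
    nlinarith [e1, e2]
  have b00 := psd_bound (hpsd ![0,0])
  have b01 := psd_bound (hpsd ![0,1])
  have b10 := psd_bound (hpsd ![1,0])
  have b11 := psd_bound (hpsd ![1,1])
  have tri1 : enorm3 (t • (m + n)) ≤ scalarOf (J ![0,0]) + scalarOf (J ![1,1]) := by
    rw [hA]; exact le_trans (enorm3_sub_le _ _) (by linarith [b00, b11])
  have tri2 : enorm3 (t • (m - n)) ≤ scalarOf (J ![0,1]) + scalarOf (J ![1,0]) := by
    rw [hB]; exact le_trans (enorm3_sub_le _ _) (by linarith [b01, b10])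
  rw [enorm3_smul ht] at tri1
  rw [enorm3_smul ht] at tri2
  nlinarith [tri1, tri2, htots]

/-! ### Sufficiency -/

def sg : Fin 2 → ℝ := ![1, -1]

lemma sufficiency {t : ℝ} (ht : 0 ≤ t) (m n : Fin 3 → ℝ)
    (h2 : t * (enorm3 (m + n) + enorm3 (m - n)) ≤ 2) :
    Compatible fun x => noisyPair t (![qmat 0 m, qmat 0 n] x) := by
  set a := t • m with ha
  set b := t • n with hb
  have hab : a + b = t • (m + n) := by funext i; simp [ha, hb, mul_add]
  have hab' : a - b = t • (m - n) := by funext i; simp [ha, hb, mul_sub]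
  set P := enorm3 (a + b) with hP
  set Q := enorm3 (a - b) with hQ
  have hPQ : P + Q ≤ 2 := by
    rw [hP, hQ, hab, hab', enorm3_smul ht, enorm3_smul ht]; linarith [h2]
  have hP0 : 0 ≤ P := enorm3_nonneg _
  have hQ0 : 0 ≤ Q := enorm3_nonneg _
  set c := (P - Q) / 2 with hc
  refine ⟨fun f => qmat ((1 + sg (f 0) * sg (f 1) * c) / 4)
      ((sg (f 0) / 4) • a + (sg (f 1) / 4) • b), ?_, ?_, ?_⟩
  · intro f
    have h2cases : ∀ i : Fin 2, i = 0 ∨ i = 1 := by decide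
    apply qmat_psd
    rcases h2cases (f 0) with h0 | h0 <;> rcases h2cases (f 1) with h1 | h1 <;>
      rw [h0, h1] <;> simp only [sg, Matrix.cons_val_zero, Matrix.cons_val_one, Matrix.head_cons]
    · rw [show ((1:ℝ)/4) • a + ((1:ℝ)/4) • b = ((1:ℝ)/4) • (a + b) by
        funext i; simp; ring]
      rw [enorm3_abs_smul]
      rw [abs_of_nonneg (by norm_num : (0:ℝ) ≤ 1/4)]
      rw [← hP, hc]; linarith
    · rw [show ((1:ℝ)/4) • a + ((-1:ℝ)/4) • b = ((1:ℝ)/4) • (a - b) by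
        funext i; simp; ring]
      rw [enorm3_abs_smul]
      rw [abs_of_nonneg (by norm_num : (0:ℝ) ≤ 1/4)]
      rw [← hQ, hc]; linarith
    · rw [show ((-1:ℝ)/4) • a + ((1:ℝ)/4) • b = (-(1:ℝ)/4) • (a - b) by
        funext i; simp; ring]
      rw [enorm3_abs_smul]
      rw [show |(-(1:ℝ)/4)| = 1/4 by norm_num]
      rw [← hQ, hc]; linarith
    · rw [show ((-1:ℝ)/4) • a + ((-1:ℝ)/4) • b = (-(1:ℝ)/4) • (a + b) by
        funext i; simp; ring]
      rw [enorm3_abs_smul]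
      rw [show |(-(1:ℝ)/4)| = 1/4 by norm_num]
      rw [← hP, hc]; linarith
  · rw [sum_funtype]
    simp only [Matrix.cons_val_zero, Matrix.cons_val_one, Matrix.head_cons]
    rw [qmat_add, qmat_add, qmat_add, ← qmat_one]
    refine qmat_congr ?_ ?_
    · simp [sg]; ring
    · funext i; simp [sg]; ring
  · intro x i
    have h2cases : ∀ i : Fin 2, i = 0 ∨ i = 1 := by decide
    rcases h2cases x with hx | hx <;> rcases h2cases i with hi | hi <;> rw [hx, hi] <;>
      rw [sum_filter_fun, sum_funtype] <;>
      norm_num <;>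
      rw [qmat_add]
    · rw [noisy0 t m]
      refine qmat_congr (by simp [sg]; try ring) ?_
      funext i
      simp only [ha, hb, Pi.add_apply, Pi.smul_apply, smul_eq_mul, sg, Matrix.cons_val_zero,
        Matrix.cons_val_one, Matrix.head_cons]
      ring
    · rw [noisy1 t m]
      refine qmat_congr (by simp [sg]; try ring) ?_
      funext i
      simp only [ha, hb, Pi.add_apply, Pi.smul_apply, smul_eq_mul, sg, Matrix.cons_val_zero,
        Matrix.cons_val_one, Matrix.head_cons]
      ring
    · rw [noisy0 t n]
      refine qmat_congr (by simp [sg]; try ring) ?_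
      funext i
      simp only [ha, hb, Pi.add_apply, Pi.smul_apply, smul_eq_mul, sg, Matrix.cons_val_zero,
        Matrix.cons_val_one, Matrix.head_cons]
      ring
    · rw [noisy1 t n]
      refine qmat_congr (by simp [sg]; try ring) ?_
      funext i
      simp only [ha, hb, Pi.add_apply, Pi.smul_apply, smul_eq_mul, sg, Matrix.cons_val_zero,
        Matrix.cons_val_one, Matrix.head_cons]
      ring

end S5
end S5Aux

/-- compatibility degree of two unbiased qubit observables. -/
theorem stmt5 (m n : Fin 3 → ℝ)
    (hm : enorm3 m ≤ 1) (hn : enorm3 n ≤ 1) (hmn : ¬(m = 0 ∧ n = 0)) :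
    tau ![m 0 • PauliX + m 1 • PauliY + m 2 • PauliZ,
         n 0 • PauliX + n 1 • PauliY + n 2 • PauliZ] =
      min 1 (2 / (enorm3 (m + n) + enorm3 (m - n))) := by
  classical
  have hobs : ![m 0 • PauliX + m 1 • PauliY + m 2 • PauliZ,
      n 0 • PauliX + n 1 • PauliY + n 2 • PauliZ] = ![S5.qmat 0 m, S5.qmat 0 n] := by
    rw [S5.pauliExp m, S5.pauliExp n]
  rw [hobs]
  set S := enorm3 (m + n) + enorm3 (m - n) with hS
  have hSpos : 0 < S := by
    rcases lt_or_eq_of_le (add_nonneg (S5.enorm3_nonneg (m+n)) (S5.enorm3_nonneg (m-n))) with h | h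
    · exact h
    · exfalso
      have h1 : enorm3 (m + n) = 0 := by
        have := S5.enorm3_nonneg (m + n); have := S5.enorm3_nonneg (m - n); linarith
      have h2 : enorm3 (m - n) = 0 := by
        have := S5.enorm3_nonneg (m + n); have := S5.enorm3_nonneg (m - n); linarith
      have e1 := S5.enorm3_eq_zero h1
      have e2 := S5.enorm3_eq_zero h2
      apply hmn
      constructor <;> funext i <;>
        [have := congr_fun e1 i; have := congr_fun e1 i] <;>
        have h2' := congr_fun e2 i <;>
        simp [Pi.add_apply, Pi.sub_apply] at this h2' ⊢ <;> linarith
  set tstar := min 1 (2 / S) with htstar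
  have htstar0 : 0 ≤ tstar := le_min zero_le_one (by positivity)
  have hset : {t : ℝ | 0 ≤ t ∧ t ≤ 1 ∧
      Compatible fun x => noisyPair t (![S5.qmat 0 m, S5.qmat 0 n] x)} = Set.Icc 0 tstar := by
    ext t
    constructor
    · rintro ⟨h0, h1, hcomp⟩
      refine ⟨h0, le_min h1 ?_⟩
      have := S5.necessity h0 m n hcomp
      rw [le_div_iff₀ hSpos, hS]
      linarith [this]
    · rintro ⟨h0, h1⟩
      refine ⟨h0, le_trans h1 (min_le_left _ _), ?_⟩
      apply S5.sufficiency h0 m n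
      have ht2 : t ≤ 2 / S := le_trans h1 (min_le_right _ _)
      rw [le_div_iff₀ hSpos, hS] at ht2
      linarith [ht2]
  rw [tau, hset, csSup_Icc htstar0]
end

section
/- Let d ≥ 2, let U_1, …, U_g be d×d unitary matrices, and let t satisfy (d·η(U_1, …, U_g) − g)/(g(d−1)) < t ≤ 1. Then the d-outcome POVMs (t U_x|i⟩⟨i|U_x^* + (1−t)I/d)_{i∈[d]}, x ∈ [g], on ℂ^d form an incompatible family. -/
open Matrix MeasureTheory Filter
open scoped BigOperators ComplexOrder

namespace Stmt8Aux

lemma star_dot_self (d : ℕ) (w : Fin d → ℂ) :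
    star w ⬝ᵥ w = ((∑ i, Complex.normSq (w i) : ℝ) : ℂ) := by
  simp only [dotProduct, Pi.star_apply, Complex.ofReal_sum]
  refine Finset.sum_congr rfl fun i _ => ?_
  rw [Complex.star_def, ← Complex.normSq_eq_conj_mul_self]

lemma rayleigh_bddAbove {d : ℕ} (M : Matrix (Fin d) (Fin d) ℂ) :
    BddAbove {r : ℝ | ∃ v : Fin d → ℂ, star v ⬝ᵥ v = 1 ∧ r = (star v ⬝ᵥ (M *ᵥ v)).re} := by
  refine ⟨∑ i, ∑ j, ‖(M i j)‖, ?_⟩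
  rintro r ⟨v, hv, rfl⟩
  have hv' : ∑ i, Complex.normSq (v i) = 1 := by
    have := (star_dot_self d v) ▸ hv
    exact_mod_cast this
  have hvi : ∀ i, ‖(v i)‖ ≤ 1 := by
    intro i
    rw [← Real.sqrt_one, Complex.norm_def]
    apply Real.sqrt_le_sqrt
    rw [← hv']
    exact Finset.single_le_sum (fun j _ => Complex.normSq_nonneg (v j)) (Finset.mem_univ i)
  calc (star v ⬝ᵥ (M *ᵥ v)).re ≤ ‖(star v ⬝ᵥ (M *ᵥ v))‖ := Complex.re_le_norm _
    _ ≤ ∑ i, ‖((star v) i * (M *ᵥ v) i)‖ := by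
        simpa [dotProduct] using norm_sum_le Finset.univ (fun i => (star v) i * (M *ᵥ v) i)
    _ ≤ ∑ i, ∑ j, ‖(M i j)‖ := by
        refine Finset.sum_le_sum fun i _ => ?_
        rw [norm_mul]
        calc ‖((star v) i)‖ * ‖((M *ᵥ v) i)‖
            ≤ 1 * ‖((M *ᵥ v) i)‖ := by
              apply mul_le_mul_of_nonneg_right _ (norm_nonneg _)
              simpa using hvi i
          _ = ‖(∑ j, M i j * v j)‖ := by rw [one_mul]; rfl
          _ ≤ ∑ j, ‖(M i j * v j)‖ :=
              norm_sum_le _ _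
          _ ≤ ∑ j, ‖(M i j)‖ := by
              refine Finset.sum_le_sum fun j _ => ?_
              rw [norm_mul]
              calc ‖(M i j)‖ * ‖(v j)‖
                  ≤ ‖(M i j)‖ * 1 :=
                    mul_le_mul_of_nonneg_left (hvi j) (norm_nonneg _)
                _ = _ := mul_one _

lemma rayleigh_le {d : ℕ} (M : Matrix (Fin d) (Fin d) ℂ) (w : Fin d → ℂ) :
    (star w ⬝ᵥ (M *ᵥ w)).re ≤ lambdaMax M * (star w ⬝ᵥ w).re := by
  set n : ℝ := ∑ i, Complex.normSq (w i) with hn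
  have hsw : star w ⬝ᵥ w = (n : ℂ) := star_dot_self d w
  have hn0 : 0 ≤ n := Finset.sum_nonneg fun i _ => Complex.normSq_nonneg _
  rcases eq_or_lt_of_le hn0 with h0 | hpos
  · have hw : w = 0 := by
      funext i
      have : Complex.normSq (w i) = 0 := by
        have := Finset.sum_eq_zero_iff_of_nonneg
          (fun j (_ : j ∈ Finset.univ) => Complex.normSq_nonneg (w j)) |>.mp h0.symm
        exact this i (Finset.mem_univ i)
      exact Complex.normSq_eq_zero.mp this
    simp [hw, hsw, ← h0]
  · set a : ℂ := (((Real.sqrt n)⁻¹ : ℝ) : ℂ) with ha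
    set v : Fin d → ℂ := a • w with hvdef
    have hsq : (Real.sqrt n)⁻¹ * ((Real.sqrt n)⁻¹ * n) = 1 := by
      rw [← mul_assoc, ← mul_inv, Real.mul_self_sqrt hn0]
      field_simp
    have hstarv : star v = a • star w := by
      rw [hvdef, star_smul]
      congr 1
      rw [ha]; simp [Complex.star_def]
    have hv1 : star v ⬝ᵥ v = 1 := by
      rw [hvdef, hstarv, smul_dotProduct, dotProduct_smul, hsw, ha, smul_eq_mul, smul_eq_mul,
        ← Complex.ofReal_mul, ← Complex.ofReal_mul, hsq, Complex.ofReal_one]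
    have hmem : (star v ⬝ᵥ (M *ᵥ v)).re
        ∈ {r : ℝ | ∃ u : Fin d → ℂ, star u ⬝ᵥ u = 1 ∧ r = (star u ⬝ᵥ (M *ᵥ u)).re} :=
      ⟨v, hv1, rfl⟩
    have hle := le_csSup (rayleigh_bddAbove M) hmem
    have hray : (star v ⬝ᵥ (M *ᵥ v)).re
        = (Real.sqrt n)⁻¹ * ((Real.sqrt n)⁻¹ * (star w ⬝ᵥ (M *ᵥ w)).re) := by
      rw [hvdef, hstarv, Matrix.mulVec_smul, smul_dotProduct, dotProduct_smul, ha,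
        smul_eq_mul, smul_eq_mul, ← mul_assoc, ← Complex.ofReal_mul, Complex.re_ofReal_mul]
      ring
    have hs : 0 < Real.sqrt n := Real.sqrt_pos.mpr hpos
    rw [hsw, Complex.ofReal_re]
    rw [hray] at hle
    calc (star w ⬝ᵥ (M *ᵥ w)).re
        = ((Real.sqrt n)⁻¹ * ((Real.sqrt n)⁻¹ * (star w ⬝ᵥ (M *ᵥ w)).re)) * n := by
          rw [show (Real.sqrt n)⁻¹ * ((Real.sqrt n)⁻¹ * (star w ⬝ᵥ (M *ᵥ w)).re) * n
              = ((Real.sqrt n)⁻¹ * ((Real.sqrt n)⁻¹ * n)) * (star w ⬝ᵥ (M *ᵥ w)).re by ring,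
            hsq, one_mul]
      _ ≤ lambdaMax M * n := mul_le_mul_of_nonneg_right hle hn0


lemma diag_BMBH {d : ℕ} (M B : Matrix (Fin d) (Fin d) ℂ) (k : Fin d) :
    (B * M * Bᴴ) k k = star (star (B k)) ⬝ᵥ (M *ᵥ star (B k)) := by
  simp only [Matrix.mul_apply, Matrix.conjTranspose_apply, dotProduct, Matrix.mulVec,
    Pi.star_apply, star_star, Finset.sum_mul, Finset.mul_sum]
  rw [Finset.sum_comm]
  refine Finset.sum_congr rfl fun i _ => Finset.sum_congr rfl fun j _ => ?_
  ring

lemma diag_BBH {d : ℕ} (B : Matrix (Fin d) (Fin d) ℂ) (k : Fin d) :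
    (B * Bᴴ) k k = star (star (B k)) ⬝ᵥ (star (B k)) := by
  simp only [Matrix.mul_apply, Matrix.conjTranspose_apply, dotProduct,
    Pi.star_apply, star_star]

lemma trace_re_nonneg {d : ℕ} {J : Matrix (Fin d) (Fin d) ℂ} (hJ : J.PosSemidef) :
    0 ≤ (J.trace).re := by
  obtain ⟨B, rfl⟩ : ∃ B : Matrix (Fin d) (Fin d) ℂ, J = Bᴴ * B := by
    open scoped Matrix.Norms.L2Operator MatrixOrder in
    exact CStarAlgebra.nonneg_iff_eq_star_mul_self.mp hJ.nonneg
  rw [Matrix.trace_mul_comm]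
  rw [Matrix.trace, Complex.re_sum]
  refine Finset.sum_nonneg fun k _ => ?_
  rw [Matrix.diag_apply, diag_BBH, star_dot_self, Complex.ofReal_re]
  exact Finset.sum_nonneg fun i _ => Complex.normSq_nonneg _

lemma trace_mul_le {d : ℕ} (M : Matrix (Fin d) (Fin d) ℂ) {J : Matrix (Fin d) (Fin d) ℂ}
    (hJ : J.PosSemidef) :
    ((M * J).trace).re ≤ lambdaMax M * (J.trace).re := by
  obtain ⟨B, rfl⟩ : ∃ B : Matrix (Fin d) (Fin d) ℂ, J = Bᴴ * B := by
    open scoped Matrix.Norms.L2Operator MatrixOrder in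
    exact CStarAlgebra.nonneg_iff_eq_star_mul_self.mp hJ.nonneg
  have h1 : (M * (Bᴴ * B)).trace = (B * M * Bᴴ).trace := by
    rw [← Matrix.mul_assoc, Matrix.trace_mul_cycle]
  have h2 : (Bᴴ * B).trace = (B * Bᴴ).trace := Matrix.trace_mul_comm _ _
  rw [h1, h2, Matrix.trace, Matrix.trace, Complex.re_sum, Complex.re_sum, Finset.mul_sum]
  refine Finset.sum_le_sum fun k _ => ?_
  rw [Matrix.diag_apply, Matrix.diag_apply, diag_BMBH, diag_BBH]
  exact rayleigh_le M (star (B k))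

end Stmt8Aux

/-- for `t > (d·η(U₁,…,U_g) - g)/(g(d-1))`, the noisy basis measurements are
incompatible. -/
theorem stmt8 {d g : ℕ} (hd : 2 ≤ d) (hg : 1 ≤ g)
    (U : Fin g → Matrix (Fin d) (Fin d) ℂ)
    (hU : ∀ x, U x ∈ Matrix.unitaryGroup (Fin d) ℂ)
    (t : ℝ) (ht1 : (d * eta U - g) / (g * (d - 1)) < t) (ht2 : t ≤ 1) :
    ¬ Compatible fun x => basisPOVM t (U x) := by
  rintro ⟨J, hJpos, hJsum, hmarg⟩
  classical
  have hmarg' : ∀ (x : Fin g) (i : Fin d), basisPOVM t (U x) i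
      = ∑ f ∈ Finset.univ.filter fun f : Fin g → Fin d => f x = i, J f := hmarg
  set P : Fin g → Fin d → Matrix (Fin d) (Fin d) ℂ :=
    fun x i => U x * Matrix.single i i (1:ℂ) * (U x)ᴴ with hPdef
  set Mf : (Fin g → Fin d) → Matrix (Fin d) (Fin d) ℂ := fun f => ∑ x, P x (f x) with hMfdef
  -- each lambdaMax (Mf f) is at most eta U
  have hEta : ∀ f : Fin g → Fin d, lambdaMax (Mf f) ≤ eta U := by
    intro f
    have hbdd : BddAbove {r : ℝ | ∃ f : Fin g → Fin d,
        r = lambdaMax (∑ x, U x * Matrix.single (f x) (f x) 1 * (U x)ᴴ)} := by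
      have hset : {r : ℝ | ∃ f : Fin g → Fin d,
          r = lambdaMax (∑ x, U x * Matrix.single (f x) (f x) 1 * (U x)ᴴ)}
          = Set.range (fun f : Fin g → Fin d =>
            lambdaMax (∑ x, U x * Matrix.single (f x) (f x) 1 * (U x)ᴴ)) := by
        ext r
        simp only [Set.mem_setOf_eq, Set.mem_range, eq_comm]
      rw [hset]
      exact (Set.finite_range _).bddAbove
    exact le_csSup hbdd ⟨f, rfl⟩
  -- unitarity
  have hU' : ∀ x : Fin g, (U x)ᴴ * U x = 1 := by
    intro x
    have := Matrix.mem_unitaryGroup_iff'.mp (hU x)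
    simpa [Matrix.star_eq_conjTranspose] using this
  -- P x i is an idempotent of trace one
  have hPP : ∀ (x : Fin g) (i : Fin d), P x i * P x i = P x i := by
    intro x i
    show U x * Matrix.single i i (1:ℂ) * (U x)ᴴ * (U x * Matrix.single i i (1:ℂ) * (U x)ᴴ)
      = U x * Matrix.single i i (1:ℂ) * (U x)ᴴ
    calc U x * Matrix.single i i (1:ℂ) * (U x)ᴴ * (U x * Matrix.single i i (1:ℂ) * (U x)ᴴ)
        = U x * Matrix.single i i (1:ℂ) * (((U x)ᴴ * U x)
            * (Matrix.single i i (1:ℂ) * (U x)ᴴ)) := by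
          simp only [Matrix.mul_assoc]
      _ = U x * (Matrix.single i i (1:ℂ) * Matrix.single i i (1:ℂ)) * (U x)ᴴ := by
          rw [hU' x, one_mul]
          simp only [Matrix.mul_assoc]
      _ = U x * Matrix.single i i (1:ℂ) * (U x)ᴴ := by
          rw [Matrix.single_mul_single_same, one_mul]
  have htrP : ∀ (x : Fin g) (i : Fin d), (P x i).trace = 1 := by
    intro x i
    show (U x * Matrix.single i i (1:ℂ) * (U x)ᴴ).trace = 1
    rw [Matrix.trace_mul_cycle (U x) (Matrix.single i i (1:ℂ)) ((U x)ᴴ), hU' x, one_mul,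
      Matrix.trace_single_eq_same]
  -- the key trace computation
  have key1 : ∀ (x : Fin g) (i : Fin d),
      ((P x i) * basisPOVM t (U x) i).trace = (((t + (1 - t) / d : ℝ)) : ℂ) := by
    intro x i
    have hb : basisPOVM t (U x) i
        = (t : ℂ) • P x i + (((1 - t) / d : ℝ) : ℂ) • (1 : Matrix (Fin d) (Fin d) ℂ) := rfl
    rw [hb, Matrix.mul_add, Matrix.mul_smul, Matrix.mul_smul, Matrix.trace_add,
      Matrix.trace_smul, Matrix.trace_smul, hPP x i, Matrix.mul_one, htrP x i]
    simp only [smul_eq_mul]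
    push_cast
    ring
  -- regrouping the total sum
  have key2 : (∑ f : Fin g → Fin d, ((Mf f) * J f).trace)
      = ∑ x : Fin g, ∑ i : Fin d, ((P x i) * basisPOVM t (U x) i).trace := by
    calc ∑ f : Fin g → Fin d, ((Mf f) * J f).trace
        = ∑ f : Fin g → Fin d, ∑ x : Fin g, ((P x (f x)) * J f).trace := by
          refine Finset.sum_congr rfl fun f _ => ?_
          rw [hMfdef]
          rw [Finset.sum_mul, Matrix.trace_sum]
      _ = ∑ x : Fin g, ∑ f : Fin g → Fin d, ((P x (f x)) * J f).trace := Finset.sum_comm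
      _ = ∑ x : Fin g, ∑ i : Fin d,
            ∑ f ∈ Finset.univ.filter (fun f : Fin g → Fin d => f x = i),
              ((P x (f x)) * J f).trace := by
          refine Finset.sum_congr rfl fun x _ => ?_
          have h := Finset.sum_fiberwise_eq_sum_filter (Finset.univ) (Finset.univ)
            (fun f : Fin g → Fin d => f x) (fun f => ((P x (f x)) * J f).trace)
          simpa using h.symm
      _ = ∑ x : Fin g, ∑ i : Fin d, ((P x i) * basisPOVM t (U x) i).trace := by
          refine Finset.sum_congr rfl fun x _ => Finset.sum_congr rfl fun i _ => ?_
          have e1 : ∑ f ∈ Finset.univ.filter (fun f : Fin g → Fin d => f x = i),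
                ((P x (f x)) * J f).trace
              = ∑ f ∈ Finset.univ.filter (fun f : Fin g → Fin d => f x = i),
                ((P x i) * J f).trace := by
            refine Finset.sum_congr rfl fun f hf => ?_
            rw [(Finset.mem_filter.mp hf).2]
          rw [e1, ← Matrix.trace_sum, ← Finset.mul_sum, ← hmarg' x i]
  have hd' : (2 : ℝ) ≤ (d : ℝ) := by exact_mod_cast hd
  have hg' : (1 : ℝ) ≤ (g : ℝ) := by exact_mod_cast hg
  have hd0 : (0 : ℝ) < (d : ℝ) := by linarith
  -- the total sum, numerically
  have hsum : (∑ f : Fin g → Fin d, ((Mf f) * J f).trace).re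
      = (g : ℝ) * (d : ℝ) * (t + (1 - t) / d) := by
    rw [key2]
    have : ∑ x : Fin g, ∑ i : Fin d, ((P x i) * basisPOVM t (U x) i).trace
        = (((g : ℝ) * (d : ℝ) * (t + (1 - t) / d) : ℝ) : ℂ) := by
      rw [Finset.sum_congr rfl fun x _ => Finset.sum_congr rfl fun i _ => key1 x i]
      simp only [Finset.sum_const, Finset.card_univ, Fintype.card_fin, nsmul_eq_mul]
      push_cast
      ring
    rw [this, Complex.ofReal_re]
  -- the upper bound via lambdaMax
  have hub : (∑ f : Fin g → Fin d, ((Mf f) * J f).trace).re ≤ eta U * (d : ℝ) := by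
    rw [Complex.re_sum]
    calc ∑ f : Fin g → Fin d, ((Mf f) * J f).trace.re
        ≤ ∑ f : Fin g → Fin d, eta U * ((J f).trace).re := by
          refine Finset.sum_le_sum fun f _ => ?_
          calc ((Mf f) * J f).trace.re
              ≤ lambdaMax (Mf f) * ((J f).trace).re := Stmt8Aux.trace_mul_le _ (hJpos f)
            _ ≤ eta U * ((J f).trace).re :=
                mul_le_mul_of_nonneg_right (hEta f) (Stmt8Aux.trace_re_nonneg (hJpos f))
      _ = eta U * ∑ f : Fin g → Fin d, ((J f).trace).re := by rw [Finset.mul_sum]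
      _ = eta U * (d : ℝ) := by
          rw [← Complex.re_sum, ← Matrix.trace_sum, hJsum, Matrix.trace_one]
          simp
  have hmain : (g : ℝ) * (d : ℝ) * (t + (1 - t) / d) ≤ eta U * (d : ℝ) := hsum ▸ hub
  have hgd : (0 : ℝ) < (g : ℝ) * ((d : ℝ) - 1) := by nlinarith
  rw [div_lt_iff₀ hgd] at ht1
  have hexp : (g : ℝ) * (d : ℝ) * (t + (1 - t) / d)
      = t * ((g : ℝ) * ((d : ℝ) - 1)) + (g : ℝ) := by
    field_simp
    ring
  have hcomm : eta U * (d : ℝ) = (d : ℝ) * eta U := mul_comm _ _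
  linarith
end
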